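/- arXiv:1510.01900 — 7 statements merged into one kernel-verified Lean document; each statement's English description precedes it below -/
import Mathlib

section
/- The rank numbers determine a clan uniquely: if two (p,q)-clans γ and τ satisfy γ(i;+) = τ(i;+), γ(i;-) = τ(i;-) for all i, and γ(i;j) = τ(i;j) for all i < j, then γ = τ. -/
open Finset

/-- A `(p,q)`-clan: an involution of `{1,…,n}` (`n = p+q`, realized as `Fin (p+q)`)
with each fixed point decorated by a sign (`true` = `+`, `false` = `-`), normalized so
that non-fixed points carry the default sign `true`, and such that
`(#+ fixed points) - (#- fixed points) = p - q`. -/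
structure Clan (p q : ℕ) where
  invol : Equiv.Perm (Fin (p + q))
  invol_invol : ∀ a, invol (invol a) = a
  sgn : Fin (p + q) → Bool
  sgn_default : ∀ a, invol a ≠ a → sgn a = true
  balance :
    ((Finset.univ : Finset (Fin (p + q))).filter
        (fun a => invol a = a ∧ sgn a = true)).card + q =
    ((Finset.univ : Finset (Fin (p + q))).filter
        (fun a => invol a = a ∧ sgn a = false)).card + p

namespace Clan

variable {p q : ℕ}

/-- `γ(i;+)`: the number of `+` fixed points among (1-based) positions `1..i`, plus the
number of 2-cycles contained in `[1,i]` (each 2-cycle counted once, via its smaller element). -/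
def rankP (γ : Clan p q) (i : ℕ) : ℕ :=
  ((Finset.univ : Finset (Fin (p + q))).filter
      (fun a => γ.invol a = a ∧ γ.sgn a = true ∧ a.val < i)).card +
  ((Finset.univ : Finset (Fin (p + q))).filter
      (fun a => a.val < (γ.invol a).val ∧ (γ.invol a).val < i)).card

/-- `γ(i;-)`: the number of `-` fixed points among positions `1..i`, plus the
number of 2-cycles contained in `[1,i]`. -/
def rankM (γ : Clan p q) (i : ℕ) : ℕ :=
  ((Finset.univ : Finset (Fin (p + q))).filter
      (fun a => γ.invol a = a ∧ γ.sgn a = false ∧ a.val < i)).card +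
  ((Finset.univ : Finset (Fin (p + q))).filter
      (fun a => a.val < (γ.invol a).val ∧ (γ.invol a).val < i)).card

/-- `γ(i;j)`: the number of 2-cycles `{s,t}` (1-based) with `s ≤ i < j < t`. -/
def rankJ (γ : Clan p q) (i j : ℕ) : ℕ :=
  ((Finset.univ : Finset (Fin (p + q))).filter
      (fun a => a.val < i ∧ j ≤ (γ.invol a).val)).card

/-- The combinatorial Bruhat order:
`γ ≤ τ` iff `γ(i;±) ≥ τ(i;±)` for all `i` and `γ(i;j) ≤ τ(i;j)` for all `i < j`. -/
def le (γ τ : Clan p q) : Prop :=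
  (∀ i, τ.rankP i ≤ γ.rankP i) ∧ (∀ i, τ.rankM i ≤ γ.rankM i) ∧
  (∀ i j, i < j → γ.rankJ i j ≤ τ.rankJ i j)

def lt (γ τ : Clan p q) : Prop := Clan.le γ τ ∧ γ ≠ τ

end Clan
section Aux

open Finset

private lemma card_filter_succL {n : ℕ} (P : Fin n → Prop) [DecidablePred P] {i : ℕ} (hi : i < n) :
    (univ.filter (fun a : Fin n => P a ∧ a.val < i + 1)).card =
    (univ.filter (fun a : Fin n => P a ∧ a.val < i)).card + (if P ⟨i, hi⟩ then 1 else 0) := by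
  by_cases h : P ⟨i, hi⟩
  · rw [if_pos h]
    have hset : (univ.filter (fun a : Fin n => P a ∧ a.val < i + 1)) =
        insert ⟨i, hi⟩ (univ.filter (fun a : Fin n => P a ∧ a.val < i)) := by
      ext a
      simp only [mem_filter, mem_insert, mem_univ, true_and]
      constructor
      · rintro ⟨hp, hlt⟩
        rcases Nat.lt_succ_iff_lt_or_eq.mp hlt with h' | h'
        · exact Or.inr ⟨hp, h'⟩
        · exact Or.inl (Fin.ext h')
      · rintro (rfl | ⟨hp, hlt⟩)
        · exact ⟨h, Nat.lt_succ_self i⟩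
        · exact ⟨hp, Nat.lt_succ_of_lt hlt⟩
    rw [hset, card_insert_of_notMem (by simp)]
  · rw [if_neg h, add_zero]
    congr 1
    ext a
    simp only [mem_filter, mem_univ, true_and]
    constructor
    · rintro ⟨hp, hlt⟩
      refine ⟨hp, ?_⟩
      rcases Nat.lt_succ_iff_lt_or_eq.mp hlt with h' | h'
      · exact h'
      · exact absurd hp (by rw [show a = ⟨i, hi⟩ from Fin.ext h']; exact h)
    · rintro ⟨hp, hlt⟩; exact ⟨hp, Nat.lt_succ_of_lt hlt⟩

private lemma card_filter_succR {n : ℕ} (P : Fin n → Prop) [DecidablePred P] {i : ℕ} (hi : i < n) :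
    (univ.filter (fun a : Fin n => a.val < i + 1 ∧ P a)).card =
    (univ.filter (fun a : Fin n => a.val < i ∧ P a)).card + (if P ⟨i, hi⟩ then 1 else 0) := by
  have e1 : (univ.filter (fun a : Fin n => a.val < i + 1 ∧ P a)) =
      (univ.filter (fun a : Fin n => P a ∧ a.val < i + 1)) := by
    apply filter_congr; intro a _; exact and_comm
  have e2 : (univ.filter (fun a : Fin n => a.val < i ∧ P a)) =
      (univ.filter (fun a : Fin n => P a ∧ a.val < i)) := by
    apply filter_congr; intro a _; exact and_comm
  rw [e1, e2, card_filter_succL P hi]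

private lemma card_cyc {p q : ℕ} (γ : Clan p q) (i : ℕ) :
    ((univ : Finset (Fin (p+q))).filter
      (fun a => a.val < (γ.invol a).val ∧ (γ.invol a).val < i)).card =
    ((univ : Finset (Fin (p+q))).filter
      (fun a => (γ.invol a).val < a.val ∧ a.val < i)).card := by
  apply Finset.card_bij (fun a _ => γ.invol a)
  · intro a ha
    simp only [mem_filter, mem_univ, true_and] at *
    rw [γ.invol_invol]
    exact ⟨ha.1, ha.2⟩
  · intro a _ b _ h
    have h2 := congrArg γ.invol h
    rwa [γ.invol_invol, γ.invol_invol] at h2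
  · intro b hb
    simp only [mem_filter, mem_univ, true_and] at hb
    refine ⟨γ.invol b, ?_, γ.invol_invol b⟩
    simp only [mem_filter, mem_univ, true_and, γ.invol_invol]
    exact ⟨hb.1, hb.2⟩

private lemma rankP_step {p q : ℕ} (γ : Clan p q) (k : Fin (p+q)) :
    γ.rankP (k.val + 1) = γ.rankP k.val +
      ((if γ.invol k = k ∧ γ.sgn k = true then 1 else 0) +
       (if (γ.invol k).val < k.val then 1 else 0)) := by
  unfold Clan.rankP
  rw [card_cyc, card_cyc]
  have e1 : ∀ i : ℕ, ((univ : Finset (Fin (p+q))).filter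
      (fun a => γ.invol a = a ∧ γ.sgn a = true ∧ a.val < i)) =
      ((univ : Finset (Fin (p+q))).filter
      (fun a => (γ.invol a = a ∧ γ.sgn a = true) ∧ a.val < i)) := by
    intro i; apply filter_congr; intro a _; tauto
  rw [e1, e1, card_filter_succL (fun a : Fin (p+q) => γ.invol a = a ∧ γ.sgn a = true) k.isLt,
    card_filter_succL (fun a : Fin (p+q) => (γ.invol a).val < a.val) k.isLt]
  simp only [Fin.eta]
  try ring
  try omega

private lemma rankM_step {p q : ℕ} (γ : Clan p q) (k : Fin (p+q)) :
    γ.rankM (k.val + 1) = γ.rankM k.val +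
      ((if γ.invol k = k ∧ γ.sgn k = false then 1 else 0) +
       (if (γ.invol k).val < k.val then 1 else 0)) := by
  unfold Clan.rankM
  rw [card_cyc, card_cyc]
  have e1 : ∀ i : ℕ, ((univ : Finset (Fin (p+q))).filter
      (fun a => γ.invol a = a ∧ γ.sgn a = false ∧ a.val < i)) =
      ((univ : Finset (Fin (p+q))).filter
      (fun a => (γ.invol a = a ∧ γ.sgn a = false) ∧ a.val < i)) := by
    intro i; apply filter_congr; intro a _; tauto
  rw [e1, e1, card_filter_succL (fun a : Fin (p+q) => γ.invol a = a ∧ γ.sgn a = false) k.isLt,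
    card_filter_succL (fun a : Fin (p+q) => (γ.invol a).val < a.val) k.isLt]
  simp only [Fin.eta]
  try ring
  try omega

private lemma rankJ_step {p q : ℕ} (γ : Clan p q) (k : Fin (p+q)) (j : ℕ) :
    γ.rankJ (k.val + 1) j = γ.rankJ k.val j +
      (if j ≤ (γ.invol k).val then 1 else 0) := by
  unfold Clan.rankJ
  rw [card_filter_succR (fun a : Fin (p+q) => j ≤ (γ.invol a).val) k.isLt]
  try simp only [Fin.eta]

end Aux
set_option maxHeartbeats 1000000 in
/-- the rank numbers `γ(i;+)`, `γ(i;-)`, `γ(i;j)` determine a `(p,q)`-clan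
uniquely. -/
theorem clan_determined_by_rank_numbers {p q : ℕ} (γ τ : Clan p q)
    (h1 : ∀ i, γ.rankP i = τ.rankP i) (h2 : ∀ i, γ.rankM i = τ.rankM i)
    (h3 : ∀ i j, i < j → γ.rankJ i j = τ.rankJ i j) :
    γ = τ := by
  -- Pointwise comparison of the incremental data
  have key : ∀ k : Fin (p+q),
      ((γ.invol k = k ∧ γ.sgn k = true) ↔ (τ.invol k = k ∧ τ.sgn k = true)) ∧
      ((γ.invol k = k ∧ γ.sgn k = false) ↔ (τ.invol k = k ∧ τ.sgn k = false)) ∧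
      (((γ.invol k).val < k.val) ↔ ((τ.invol k).val < k.val)) := by
    intro k
    have sPγ := rankP_step γ k
    have sPτ := rankP_step τ k
    have sMγ := rankM_step γ k
    have sMτ := rankM_step τ k
    have eP1 := h1 (k.val + 1)
    have eP0 := h1 k.val
    have eM1 := h2 (k.val + 1)
    have eM0 := h2 k.val
    -- exclusivity facts
    have exγ1 : (γ.invol k = k ∧ γ.sgn k = true) → ¬ ((γ.invol k).val < k.val) := by
      rintro ⟨h, -⟩; rw [h]; omega
    have exτ1 : (τ.invol k = k ∧ τ.sgn k = true) → ¬ ((τ.invol k).val < k.val) := by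
      rintro ⟨h, -⟩; rw [h]; omega
    have exγ2 : (γ.invol k = k ∧ γ.sgn k = false) → ¬ ((γ.invol k).val < k.val) := by
      rintro ⟨h, -⟩; rw [h]; omega
    have exτ2 : (τ.invol k = k ∧ τ.sgn k = false) → ¬ ((τ.invol k).val < k.val) := by
      rintro ⟨h, -⟩; rw [h]; omega
    have exγ3 : (γ.invol k = k ∧ γ.sgn k = true) → ¬ (γ.invol k = k ∧ γ.sgn k = false) := by
      rintro ⟨-, h⟩ ⟨-, h'⟩; rw [h] at h'; exact Bool.noConfusion h'
    have exτ3 : (τ.invol k = k ∧ τ.sgn k = true) → ¬ (τ.invol k = k ∧ τ.sgn k = false) := by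
      rintro ⟨-, h⟩ ⟨-, h'⟩; rw [h] at h'; exact Bool.noConfusion h'
    rw [eP1, eP0] at sPγ
    rw [eM1, eM0] at sMγ
    split_ifs at sPγ sPτ sMγ sMτ
    all_goals try (exfalso; omega)
    all_goals
      refine ⟨⟨fun hh => ?_, fun hh => ?_⟩, ⟨fun hh => ?_, fun hh => ?_⟩,
        ⟨fun hh => ?_, fun hh => ?_⟩⟩ <;>
        first | assumption | contradiction | (exfalso; omega) | (exfalso; exact exγ3 ‹_› ‹_›) | (exfalso; exact exτ3 ‹_› ‹_›)
  -- the involutions agree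
  have hlt : ∀ k : Fin (p+q), k.val < (γ.invol k).val →
      (γ.invol k).val = (τ.invol k).val := by
    intro k hk
    have hγne : γ.invol k ≠ k := by
      intro h; rw [h] at hk; omega
    have hAγ : ¬ (γ.invol k = k ∧ γ.sgn k = true) := fun h => hγne h.1
    have hCγ : ¬ (γ.invol k = k ∧ γ.sgn k = false) := fun h => hγne h.1
    have hBγ : ¬ ((γ.invol k).val < k.val) := by omega
    have hAτ : ¬ (τ.invol k = k ∧ τ.sgn k = true) := fun h => hAγ ((key k).1.mpr h)
    have hCτ : ¬ (τ.invol k = k ∧ τ.sgn k = false) := fun h => hCγ ((key k).2.1.mpr h)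
    have hBτ : ¬ ((τ.invol k).val < k.val) := fun h => hBγ ((key k).2.2.mpr h)
    have hτne : τ.invol k ≠ k := by
      intro h
      rcases Bool.eq_false_or_eq_true (τ.sgn k) with hs | hs
      · exact hAτ ⟨h, hs⟩
      · exact hCτ ⟨h, hs⟩
    have hk' : k.val < (τ.invol k).val := by
      rcases Nat.lt_trichotomy (τ.invol k).val k.val with h | h | h
      · exact absurd h hBτ
      · exact absurd (Fin.ext h) hτne
      · exact h
    have hiff : ∀ j, k.val + 1 < j → (j ≤ (γ.invol k).val ↔ j ≤ (τ.invol k).val) := by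
      intro j hj
      have e1 := h3 (k.val + 1) j hj
      have e0 := h3 k.val j (by omega)
      have s1 := rankJ_step γ k j
      have s2 := rankJ_step τ k j
      rw [e1, e0] at s1
      split_ifs at s1 s2 <;> first | tauto | (exfalso; omega)
    by_cases hx : k.val + 1 < (γ.invol k).val
    · have hxy : (γ.invol k).val ≤ (τ.invol k).val := (hiff _ hx).mp le_rfl
      have hy : k.val + 1 < (τ.invol k).val := by omega
      have hyx : (τ.invol k).val ≤ (γ.invol k).val := (hiff _ hy).mpr le_rfl
      omega
    · by_cases hy : k.val + 1 < (τ.invol k).val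
      · have hyx : (τ.invol k).val ≤ (γ.invol k).val := (hiff _ hy).mpr le_rfl
        omega
      · omega
  have hinvol : ∀ k, γ.invol k = τ.invol k := by
    intro k
    rcases Nat.lt_trichotomy k.val ((γ.invol k).val) with h | h | h
    · exact Fin.ext (hlt k h)
    · have hfix : γ.invol k = k := Fin.ext h.symm
      rcases Bool.eq_false_or_eq_true (γ.sgn k) with hs | hs
      · have := ((key k).1.mp ⟨hfix, hs⟩).1
        rw [hfix, this]
      · have := ((key k).2.1.mp ⟨hfix, hs⟩).1
        rw [hfix, this]
    · have hm : (γ.invol k).val < (γ.invol (γ.invol k)).val := by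
        rw [γ.invol_invol]; exact h
      have := hlt (γ.invol k) hm
      rw [γ.invol_invol] at this
      have h4 : τ.invol (γ.invol k) = k := Fin.ext this.symm
      have h5 := congrArg τ.invol h4
      rw [τ.invol_invol] at h5
      exact h5
  have hsgn : ∀ k, γ.sgn k = τ.sgn k := by
    intro k
    by_cases hfix : γ.invol k = k
    · rcases Bool.eq_false_or_eq_true (γ.sgn k) with hs | hs
      · rw [hs, ((key k).1.mp ⟨hfix, hs⟩).2]
      · rw [hs, ((key k).2.1.mp ⟨hfix, hs⟩).2]
    · have hfix' : τ.invol k ≠ k := by rw [← hinvol k]; exact hfix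
      rw [γ.sgn_default k hfix, τ.sgn_default k hfix']
  obtain ⟨gi, gii, gs, gsd, gb⟩ := γ
  obtain ⟨ti, tii, ts, tsd, tb⟩ := τ
  have e1 : gi = ti := Equiv.ext hinvol
  subst e1
  have e2 : gs = ts := funext hsgn
  subst e2
  rfl
end

section
/- The combinatorial Bruhat order on (p,q)-clans, defined by γ ≤ τ iff γ(i;+) ≥ τ(i;+) and γ(i;-) ≥ τ(i;-) for all i and γ(i;j) ≤ τ(i;j) for all i < j, is a partial order (reflexive, antisymmetric, transitive). -/
open Finset

namespace Clan

variable {p q : ℕ}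

lemma card_step {n : ℕ} (P : Fin n → Prop) [DecidablePred P] {i : ℕ} (hi : i < n) :
    (univ.filter fun a => P a ∧ a.val < i + 1).card =
    (univ.filter fun a => P a ∧ a.val < i).card + (if P ⟨i, hi⟩ then 1 else 0) := by
  classical
  rw [Finset.card_filter, Finset.card_filter]
  have key : ∀ a : Fin n, (if P a ∧ a.val < i + 1 then 1 else 0)
      = (if P a ∧ a.val < i then 1 else 0) + (if P a ∧ a = ⟨i, hi⟩ then 1 else 0) := by
    intro a
    by_cases hP : P a
    · simp only [hP, true_and, Fin.ext_iff]
      split_ifs <;> omega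
    · simp [hP]
  rw [Finset.sum_congr rfl (fun a _ => key a), Finset.sum_add_distrib]
  congr 1
  rw [Finset.sum_eq_single (⟨i, hi⟩ : Fin n)]
  · simp
  · intro b _ hb; simp [hb]
  · simp

lemma pairs_reindex (γ : Clan p q) (i : ℕ) :
    (univ.filter fun a => a.val < (γ.invol a).val ∧ (γ.invol a).val < i).card
    = (univ.filter fun b => (γ.invol b).val < b.val ∧ b.val < i).card := by
  classical
  apply Finset.card_bij (fun a _ => γ.invol a)
  · intro a ha
    simp only [Finset.mem_filter, Finset.mem_univ, true_and] at ha ⊢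
    rw [γ.invol_invol]
    exact ha
  · intro a _ b _ h
    exact γ.invol.injective h
  · intro b hb
    simp only [Finset.mem_filter, Finset.mem_univ, true_and] at hb
    exact ⟨γ.invol b, by
      simp only [Finset.mem_filter, Finset.mem_univ, true_and, γ.invol_invol]
      exact hb, (γ.invol_invol b)⟩

lemma rankP_step (γ : Clan p q) (x : Fin (p + q)) :
    γ.rankP (x.val + 1) = γ.rankP x.val +
      ((if γ.invol x = x ∧ γ.sgn x = true then 1 else 0) +
       (if (γ.invol x).val < x.val then 1 else 0)) := by
  classical
  unfold rankP
  rw [pairs_reindex, pairs_reindex]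
  have h1 : ∀ k : ℕ, (univ.filter fun a => γ.invol a = a ∧ γ.sgn a = true ∧ a.val < k)
      = univ.filter fun a => (γ.invol a = a ∧ γ.sgn a = true) ∧ a.val < k := by
    intro k
    apply Finset.filter_congr
    intro a _
    tauto
  rw [h1, h1, card_step (fun a => γ.invol a = a ∧ γ.sgn a = true) x.isLt,
    card_step (fun b => (γ.invol b).val < b.val) x.isLt]
  simp only [Fin.eta]
  ring

lemma rankM_step (γ : Clan p q) (x : Fin (p + q)) :
    γ.rankM (x.val + 1) = γ.rankM x.val +
      ((if γ.invol x = x ∧ γ.sgn x = false then 1 else 0) +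
       (if (γ.invol x).val < x.val then 1 else 0)) := by
  classical
  unfold rankM
  rw [pairs_reindex, pairs_reindex]
  have h1 : ∀ k : ℕ, (univ.filter fun a => γ.invol a = a ∧ γ.sgn a = false ∧ a.val < k)
      = univ.filter fun a => (γ.invol a = a ∧ γ.sgn a = false) ∧ a.val < k := by
    intro k
    apply Finset.filter_congr
    intro a _
    tauto
  rw [h1, h1, card_step (fun a => γ.invol a = a ∧ γ.sgn a = false) x.isLt,
    card_step (fun b => (γ.invol b).val < b.val) x.isLt]
  simp only [Fin.eta]
  ring

lemma rankJ_step (γ : Clan p q) (x : Fin (p + q)) (j : ℕ) :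
    γ.rankJ (x.val + 1) j = γ.rankJ x.val j + (if j ≤ (γ.invol x).val then 1 else 0) := by
  classical
  unfold rankJ
  have h1 : ∀ k : ℕ, (univ.filter fun a => a.val < k ∧ j ≤ (γ.invol a).val)
      = univ.filter fun a => j ≤ (γ.invol a).val ∧ a.val < k := by
    intro k
    apply Finset.filter_congr
    intro a _
    tauto
  rw [h1, h1, card_step (fun a => j ≤ (γ.invol a).val) x.isLt]

lemma eq_of_rank_eq (γ τ : Clan p q)
    (hP : ∀ i, γ.rankP i = τ.rankP i) (hM : ∀ i, γ.rankM i = τ.rankM i)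
    (hJ : ∀ i j, i < j → γ.rankJ i j = τ.rankJ i j) : γ = τ := by
  classical
  have e1 : ∀ x : Fin (p + q),
      (if γ.invol x = x ∧ γ.sgn x = true then 1 else 0) +
        (if (γ.invol x).val < x.val then 1 else 0)
      = (if τ.invol x = x ∧ τ.sgn x = true then 1 else 0) +
        (if (τ.invol x).val < x.val then 1 else 0) := by
    intro x
    have h := hP (x.val + 1)
    rw [rankP_step γ x, rankP_step τ x, hP x.val] at h
    exact Nat.add_left_cancel h
  have e2 : ∀ x : Fin (p + q),
      (if γ.invol x = x ∧ γ.sgn x = false then 1 else 0) +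
        (if (γ.invol x).val < x.val then 1 else 0)
      = (if τ.invol x = x ∧ τ.sgn x = false then 1 else 0) +
        (if (τ.invol x).val < x.val then 1 else 0) := by
    intro x
    have h := hM (x.val + 1)
    rw [rankM_step γ x, rankM_step τ x, hM x.val] at h
    exact Nat.add_left_cancel h
  -- ascent case
  have hasc : ∀ x : Fin (p + q), x.val < (γ.invol x).val → γ.invol x = τ.invol x := by
    intro x hx
    have hfg : ¬(γ.invol x = x) := fun h => by rw [h] at hx; exact lt_irrefl _ hx
    have h1 := e1 x
    have h2 := e2 x
    have ng3 : ¬((γ.invol x).val < x.val) := by omega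
    rw [if_neg (fun h => hfg h.1), if_neg ng3] at h1
    rw [if_neg (fun h => hfg h.1), if_neg ng3] at h2
    have hd : ¬((τ.invol x).val < x.val) := by
      intro hd; rw [if_pos hd] at h1; omega
    have hp : ¬(τ.invol x = x ∧ τ.sgn x = true) := by
      intro hp; rw [if_pos hp] at h1; omega
    have hm : ¬(τ.invol x = x ∧ τ.sgn x = false) := by
      intro hm; rw [if_pos hm] at h2; omega
    have hft : ¬(τ.invol x = x) := by
      intro h
      cases hb : τ.sgn x
      · exact hm ⟨h, hb⟩
      · exact hp ⟨h, hb⟩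
    have hτasc : x.val < (τ.invol x).val := by
      have : (τ.invol x).val ≠ x.val := fun hv => hft (Fin.ext hv)
      omega
    have H : ∀ j, x.val + 2 ≤ j → ((j ≤ (γ.invol x).val) ↔ (j ≤ (τ.invol x).val)) := by
      intro j hj
      have h := hJ (x.val + 1) j (by omega)
      rw [rankJ_step γ x j, rankJ_step τ x j, hJ x.val j (by omega)] at h
      have h' := Nat.add_left_cancel h
      constructor
      · intro hA
        by_contra hB
        rw [if_pos hA, if_neg hB] at h'
        omega
      · intro hB
        by_contra hA
        rw [if_neg hA, if_pos hB] at h'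
        omega
    apply Fin.ext
    by_contra hne
    rcases lt_or_gt_of_ne hne with h | h
    · have := (H (τ.invol x).val (by omega)).mpr le_rfl
      omega
    · have := (H (γ.invol x).val (by omega)).mp le_rfl
      omega
  -- fixed point case
  have hfix : ∀ x : Fin (p + q), γ.invol x = x → τ.invol x = x ∧ γ.sgn x = τ.sgn x := by
    intro x hx
    have h1 := e1 x
    have h2 := e2 x
    have ndg : ¬((γ.invol x).val < x.val) := by rw [hx]; omega
    rw [if_neg ndg] at h1 h2
    cases hb : γ.sgn x
    · rw [if_neg (fun h => by rw [hb] at h; exact absurd h.2 (by decide))] at h1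
      rw [if_pos ⟨hx, hb⟩] at h2
      have hd : ¬((τ.invol x).val < x.val) := by
        intro hd; rw [if_pos hd] at h1; omega
      rw [if_neg hd] at h2
      have hm : τ.invol x = x ∧ τ.sgn x = false := by
        by_contra hc
        rw [if_neg hc] at h2
        omega
      exact ⟨hm.1, hm.2.symm⟩
    · rw [if_neg (fun h => by rw [hb] at h; exact absurd h.2 (by decide))] at h2
      rw [if_pos ⟨hx, hb⟩] at h1
      have hd : ¬((τ.invol x).val < x.val) := by
        intro hd; rw [if_pos hd] at h2; omega
      rw [if_neg hd] at h1
      have hm : τ.invol x = x ∧ τ.sgn x = true := by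
        by_contra hc
        rw [if_neg hc] at h1
        omega
      exact ⟨hm.1, hm.2.symm⟩
  have hinv : ∀ x, γ.invol x = τ.invol x := by
    intro x
    rcases lt_trichotomy (γ.invol x).val x.val with h | h | h
    · set y := γ.invol x with hy
      have hyx : γ.invol y = x := γ.invol_invol x
      have hyasc : y.val < (γ.invol y).val := by rw [hyx]; exact h
      have h1 := hasc y hyasc
      have hty : τ.invol y = x := by rw [← h1, hyx]
      have h2 : τ.invol x = y := by rw [← hty, τ.invol_invol]
      rw [h2]
    · have hx : γ.invol x = x := Fin.ext h
      rw [hx, (hfix x hx).1]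
    · exact hasc x h
  have hsgn : ∀ x, γ.sgn x = τ.sgn x := by
    intro x
    by_cases hx : γ.invol x = x
    · exact (hfix x hx).2
    · have hx' : τ.invol x ≠ x := by rw [← hinv x]; exact hx
      rw [γ.sgn_default x hx, τ.sgn_default x hx']
  have hi2 : γ.invol = τ.invol := Equiv.ext hinv
  have hs2 : γ.sgn = τ.sgn := funext hsgn
  cases γ
  cases τ
  dsimp only at hi2 hs2
  subst hi2
  subst hs2
  rfl

end Clan

/-- the combinatorial Bruhat order on `(p,q)`-clans is a partial order:
reflexive, antisymmetric and transitive. -/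
theorem combinatorial_bruhat_order_is_partial_order {p q : ℕ} :
    (∀ γ : Clan p q, Clan.le γ γ) ∧
    (∀ γ τ : Clan p q, Clan.le γ τ → Clan.le τ γ → γ = τ) ∧
    (∀ γ τ ρ : Clan p q, Clan.le γ τ → Clan.le τ ρ → Clan.le γ ρ) := by
  refine ⟨fun γ => ⟨fun i => le_rfl, fun i => le_rfl, fun i j _ => le_rfl⟩, ?_, ?_⟩
  · intro γ τ h1 h2
    exact Clan.eq_of_rank_eq γ τ
      (fun i => le_antisymm (h2.1 i) (h1.1 i))
      (fun i => le_antisymm (h2.2.1 i) (h1.2.1 i))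
      (fun i j hij => le_antisymm (h1.2.2 i j hij) (h2.2.2 i j hij))
  · intro γ τ ρ h1 h2
    exact ⟨fun i => le_trans (h2.1 i) (h1.1 i),
      fun i => le_trans (h2.2.1 i) (h1.2.1 i),
      fun i j hij => le_trans (h1.2.2 i j hij) (h2.2.2 i j hij)⟩
end

section
/- If γ' is obtained from a (p,q)-clan γ by replacing a + fixed point at position i and a - fixed point at position j (i < j) by a new 2-cycle {i,j} (the move +- → 11), then γ' is also a (p,q)-clan and γ < γ' in the combinatorial Bruhat order; specifically the only rank-number changes are γ'(k;+) = γ(k;+) - 1 for i ≤ k ≤ j-1 and γ'(k;l) = γ(k;l) + 1 for i ≤ k < l ≤ j-1, with all other rank numbers equal. -/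
open Finset

section MoveAux

private lemma card_erase_succ {α : Type*} [DecidableEq α] {s t : Finset α} {x : α}
    (h : t = s.erase x) (hx : x ∈ s) : t.card + 1 = s.card := by
  subst h
  rw [Finset.card_erase_of_mem hx]
  have : 0 < s.card := Finset.card_pos.mpr ⟨x, hx⟩
  omega

end MoveAux

/-- the move `+- → 11`.  If a `+` fixed point at position `i` and a `-`
fixed point at position `j > i` of a `(p,q)`-clan `γ` are replaced by a new 2-cycle
`{i,j}`, the result is again a `(p,q)`-clan `γ'` with `γ < γ'`; the only rank-number
changes are `γ'(k;+) = γ(k;+) - 1` for `i ≤ k ≤ j-1` (1-based) and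
`γ'(k;l) = γ(k;l) + 1` for `i ≤ k < l ≤ j-1`. -/
theorem move_plus_minus_to_11 {p q : ℕ} (γ : Clan p q) (i j : Fin (p + q)) (hij : i < j)
    (hi : γ.invol i = i) (hsi : γ.sgn i = true)
    (hj : γ.invol j = j) (hsj : γ.sgn j = false) :
    ∃ γ' : Clan p q,
      γ'.invol i = j ∧
      (∀ a, a ≠ i → a ≠ j → γ'.invol a = γ.invol a ∧ γ'.sgn a = γ.sgn a) ∧
      Clan.lt γ γ' ∧
      (∀ k, i.val < k → k ≤ j.val → γ'.rankP k + 1 = γ.rankP k) ∧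
      (∀ k, ¬(i.val < k ∧ k ≤ j.val) → γ'.rankP k = γ.rankP k) ∧
      (∀ k, γ'.rankM k = γ.rankM k) ∧
      (∀ k l, k < l → i.val < k → l ≤ j.val → γ'.rankJ k l = γ.rankJ k l + 1) ∧
      (∀ k l, k < l → ¬(i.val < k ∧ l ≤ j.val) → γ'.rankJ k l = γ.rankJ k l) := by
  have hne : i ≠ j := ne_of_lt hij
  have hvlt : i.val < j.val := hij
  set inv' : Equiv.Perm (Fin (p + q)) := γ.invol.trans (Equiv.swap i j) with hinvdef
  have hinv'_i : inv' i = j := by simp [hinvdef, Equiv.trans_apply, hi]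
  have hinv'_j : inv' j = i := by simp [hinvdef, Equiv.trans_apply, hj]
  have hinvne : ∀ a : Fin (p + q), a ≠ i → a ≠ j → γ.invol a ≠ i ∧ γ.invol a ≠ j := by
    intro a hai haj
    constructor <;> intro h
    · exact hai (by have := congrArg γ.invol h; rwa [γ.invol_invol, hi] at this)
    · exact haj (by have := congrArg γ.invol h; rwa [γ.invol_invol, hj] at this)
  have hinv'_other : ∀ a : Fin (p + q), a ≠ i → a ≠ j → inv' a = γ.invol a := by
    intro a hai haj
    obtain ⟨h1, h2⟩ := hinvne a hai haj
    simp [hinvdef, Equiv.trans_apply, Equiv.swap_apply_of_ne_of_ne h1 h2]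
  set sgn' : Fin (p + q) → Bool := fun a => if a = j then true else γ.sgn a with hsgndef
  have hsgn'_other : ∀ a : Fin (p + q), a ≠ j → sgn' a = γ.sgn a := by
    intro a haj; simp [hsgndef, haj]
  have hinvol2 : ∀ a, inv' (inv' a) = a := by
    intro a
    by_cases hai : a = i
    · subst hai; rw [hinv'_i, hinv'_j]
    by_cases haj : a = j
    · subst haj; rw [hinv'_j, hinv'_i]
    · have h1 := hinvne a hai haj
      rw [hinv'_other a hai haj, hinv'_other _ h1.1 h1.2, γ.invol_invol]
  have hdefault : ∀ a, inv' a ≠ a → sgn' a = true := by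
    intro a ha
    by_cases haj : a = j
    · simp [hsgndef, haj]
    by_cases hai : a = i
    · subst hai; rw [hsgn'_other _ haj]; exact hsi
    · rw [hsgn'_other _ haj]
      exact γ.sgn_default a (by rwa [hinv'_other a hai haj] at ha)
  -- balance
  have hFT : (Finset.univ.filter (fun a => inv' a = a ∧ sgn' a = true)) =
      (Finset.univ.filter (fun a : Fin (p + q) => γ.invol a = a ∧ γ.sgn a = true)).erase i := by
    ext a
    simp only [Finset.mem_filter, Finset.mem_erase, Finset.mem_univ, true_and]
    by_cases hai : a = i
    · subst hai
      refine iff_of_false ?_ ?_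
      · rintro ⟨h, -⟩; rw [hinv'_i] at h; exact hne h.symm
      · rintro ⟨h, -⟩; exact h rfl
    by_cases haj : a = j
    · subst haj
      refine iff_of_false ?_ ?_
      · rintro ⟨h, -⟩; rw [hinv'_j] at h; exact hne h
      · rintro ⟨-, -, h⟩; rw [hsj] at h; cases h
    · rw [hinv'_other a hai haj, hsgn'_other a haj]
      simp [hai]
  have hFF : (Finset.univ.filter (fun a => inv' a = a ∧ sgn' a = false)) =
      (Finset.univ.filter (fun a : Fin (p + q) => γ.invol a = a ∧ γ.sgn a = false)).erase j := by
    ext a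
    simp only [Finset.mem_filter, Finset.mem_erase, Finset.mem_univ, true_and]
    by_cases hai : a = i
    · subst hai
      refine iff_of_false ?_ ?_
      · rintro ⟨h, -⟩; rw [hinv'_i] at h; exact hne h.symm
      · rintro ⟨-, -, h⟩; rw [hsi] at h; cases h
    by_cases haj : a = j
    · subst haj
      refine iff_of_false ?_ ?_
      · rintro ⟨h, -⟩; rw [hinv'_j] at h; exact hne h
      · rintro ⟨h, -⟩; exact h rfl
    · rw [hinv'_other a hai haj, hsgn'_other a haj]
      simp [haj]
  have hiT : i ∈ Finset.univ.filter (fun a : Fin (p + q) => γ.invol a = a ∧ γ.sgn a = true) := by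
    simp [hi, hsi]
  have hjF : j ∈ Finset.univ.filter (fun a : Fin (p + q) => γ.invol a = a ∧ γ.sgn a = false) := by
    simp [hj, hsj]
  have hcardT := card_erase_succ hFT hiT
  have hcardF := card_erase_succ hFF hjF
  have hbal := γ.balance
  set γ' : Clan p q := ⟨inv', hinvol2, sgn', hdefault, by omega⟩ with hγ'def
  have hγinv : γ'.invol = inv' := rfl
  have hγsgn : γ'.sgn = sgn' := rfl
  -- the "+ fixed points" filter sets
  have hFp : ∀ k : ℕ, (Finset.univ.filter
        (fun a => inv' a = a ∧ sgn' a = true ∧ a.val < k)) =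
      (Finset.univ.filter
        (fun a : Fin (p + q) => γ.invol a = a ∧ γ.sgn a = true ∧ a.val < k)).erase i := by
    intro k
    ext a
    simp only [Finset.mem_filter, Finset.mem_erase, Finset.mem_univ, true_and]
    by_cases hai : a = i
    · subst hai
      refine iff_of_false ?_ ?_
      · rintro ⟨h, -⟩; rw [hinv'_i] at h; exact hne h.symm
      · rintro ⟨h, -⟩; exact h rfl
    by_cases haj : a = j
    · subst haj
      refine iff_of_false ?_ ?_
      · rintro ⟨h, -⟩; rw [hinv'_j] at h; exact hne h
      · rintro ⟨-, -, h, -⟩; rw [hsj] at h; cases h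
    · rw [hinv'_other a hai haj, hsgn'_other a haj]
      simp [hai]
  have hiFp : ∀ k : ℕ, i.val < k → i ∈ Finset.univ.filter
      (fun a : Fin (p + q) => γ.invol a = a ∧ γ.sgn a = true ∧ a.val < k) := by
    intro k hk; simp [hi, hsi, hk]
  have hiFpnot : ∀ k : ℕ, ¬ i.val < k → i ∉ Finset.univ.filter
      (fun a : Fin (p + q) => γ.invol a = a ∧ γ.sgn a = true ∧ a.val < k) := by
    intro k hk; simp [hk]
  -- the "- fixed points" filter sets
  have hFm : ∀ k : ℕ, (Finset.univ.filter
        (fun a => inv' a = a ∧ sgn' a = false ∧ a.val < k)) =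
      (Finset.univ.filter
        (fun a : Fin (p + q) => γ.invol a = a ∧ γ.sgn a = false ∧ a.val < k)).erase j := by
    intro k
    ext a
    simp only [Finset.mem_filter, Finset.mem_erase, Finset.mem_univ, true_and]
    by_cases hai : a = i
    · subst hai
      refine iff_of_false ?_ ?_
      · rintro ⟨h, -⟩; rw [hinv'_i] at h; exact hne h.symm
      · rintro ⟨-, -, h, -⟩; rw [hsi] at h; cases h
    by_cases haj : a = j
    · subst haj
      refine iff_of_false ?_ ?_
      · rintro ⟨h, -⟩; rw [hinv'_j] at h; exact hne h
      · rintro ⟨h, -⟩; exact h rfl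
    · rw [hinv'_other a hai haj, hsgn'_other a haj]
      simp [haj]
  have hjFm : ∀ k : ℕ, j.val < k → j ∈ Finset.univ.filter
      (fun a : Fin (p + q) => γ.invol a = a ∧ γ.sgn a = false ∧ a.val < k) := by
    intro k hk; simp [hj, hsj, hk]
  have hjFmnot : ∀ k : ℕ, ¬ j.val < k → j ∉ Finset.univ.filter
      (fun a : Fin (p + q) => γ.invol a = a ∧ γ.sgn a = false ∧ a.val < k) := by
    intro k hk; simp [hk]
  -- the "2-cycles inside [1,k]" filter sets
  have hiC : ∀ k : ℕ, i ∉ Finset.univ.filter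
      (fun a : Fin (p + q) => a.val < (γ.invol a).val ∧ (γ.invol a).val < k) := by
    intro k; simp [hi]
  have hC1 : ∀ k : ℕ, j.val < k → (Finset.univ.filter
        (fun a => a.val < (inv' a).val ∧ (inv' a).val < k)) =
      insert i (Finset.univ.filter
        (fun a : Fin (p + q) => a.val < (γ.invol a).val ∧ (γ.invol a).val < k)) := by
    intro k hk
    ext a
    simp only [Finset.mem_filter, Finset.mem_insert, Finset.mem_univ, true_and]
    by_cases hai : a = i
    · subst hai
      refine iff_of_true ?_ (Or.inl rfl)
      rw [hinv'_i]; exact ⟨hvlt, hk⟩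
    by_cases haj : a = j
    · subst haj
      refine iff_of_false ?_ ?_
      · rintro ⟨h, -⟩; rw [hinv'_j] at h; omega
      · rintro (h | ⟨h, -⟩)
        · exact hne h.symm
        · rw [hj] at h; omega
    · rw [hinv'_other a hai haj]
      simp [hai]
  have hC2 : ∀ k : ℕ, ¬ j.val < k → (Finset.univ.filter
        (fun a => a.val < (inv' a).val ∧ (inv' a).val < k)) =
      (Finset.univ.filter
        (fun a : Fin (p + q) => a.val < (γ.invol a).val ∧ (γ.invol a).val < k)) := by
    intro k hk
    ext a
    simp only [Finset.mem_filter, Finset.mem_univ, true_and]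
    by_cases hai : a = i
    · subst hai
      refine iff_of_false ?_ ?_
      · rintro ⟨-, h⟩; rw [hinv'_i] at h; omega
      · rintro ⟨h, -⟩; rw [hi] at h; omega
    by_cases haj : a = j
    · subst haj
      refine iff_of_false ?_ ?_
      · rintro ⟨h, -⟩; rw [hinv'_j] at h; omega
      · rintro ⟨h, -⟩; rw [hj] at h; omega
    · rw [hinv'_other a hai haj]
  -- the rankJ filter sets
  have hiJ : ∀ k l : ℕ, k < l → i ∉ Finset.univ.filter
      (fun a : Fin (p + q) => a.val < k ∧ l ≤ (γ.invol a).val) := by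
    intro k l hkl
    simp only [Finset.mem_filter, Finset.mem_univ, true_and, hi, not_and]
    intro h; omega
  have hJ1 : ∀ k l : ℕ, k < l → i.val < k → l ≤ j.val → (Finset.univ.filter
        (fun a => a.val < k ∧ l ≤ (inv' a).val)) =
      insert i (Finset.univ.filter
        (fun a : Fin (p + q) => a.val < k ∧ l ≤ (γ.invol a).val)) := by
    intro k l hkl hik hlj
    ext a
    simp only [Finset.mem_filter, Finset.mem_insert, Finset.mem_univ, true_and]
    by_cases hai : a = i
    · subst hai
      refine iff_of_true ?_ (Or.inl rfl)
      rw [hinv'_i]; exact ⟨hik, hlj⟩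
    by_cases haj : a = j
    · subst haj
      refine iff_of_false ?_ ?_
      · rintro ⟨h1, h2⟩; rw [hinv'_j] at h2; omega
      · rintro (h | ⟨h1, h2⟩)
        · exact hne h.symm
        · rw [hj] at h2; omega
    · rw [hinv'_other a hai haj]
      simp [hai]
  have hJ2 : ∀ k l : ℕ, k < l → ¬ (i.val < k ∧ l ≤ j.val) → (Finset.univ.filter
        (fun a => a.val < k ∧ l ≤ (inv' a).val)) =
      (Finset.univ.filter
        (fun a : Fin (p + q) => a.val < k ∧ l ≤ (γ.invol a).val)) := by
    intro k l hkl hcond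
    ext a
    simp only [Finset.mem_filter, Finset.mem_univ, true_and]
    by_cases hai : a = i
    · subst hai
      refine iff_of_false ?_ ?_
      · rintro ⟨h1, h2⟩; rw [hinv'_i] at h2; exact hcond ⟨h1, h2⟩
      · rintro ⟨h1, h2⟩; rw [hi] at h2; omega
    by_cases haj : a = j
    · subst haj
      refine iff_of_false ?_ ?_
      · rintro ⟨h1, h2⟩; rw [hinv'_j] at h2; omega
      · rintro ⟨h1, h2⟩; rw [hj] at h2; omega
    · rw [hinv'_other a hai haj]
  -- rank number statements
  have hrp1 : ∀ k, i.val < k → k ≤ j.val → γ'.rankP k + 1 = γ.rankP k := by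
    intro k hk1 hk2
    have e1 := card_erase_succ (hFp k) (hiFp k hk1)
    simp only [Clan.rankP, hγinv, hγsgn]
    rw [hC2 k (by omega)]
    omega
  have hrp2 : ∀ k, ¬(i.val < k ∧ k ≤ j.val) → γ'.rankP k = γ.rankP k := by
    intro k hk
    simp only [Clan.rankP, hγinv, hγsgn]
    by_cases hik : i.val < k
    · have hjk : j.val < k := by omega
      have e1 := card_erase_succ (hFp k) (hiFp k hik)
      have e2 : (Finset.univ.filter
          (fun a => a.val < (inv' a).val ∧ (inv' a).val < k)).card =
          (Finset.univ.filter
          (fun a : Fin (p + q) => a.val < (γ.invol a).val ∧ (γ.invol a).val < k)).card + 1 := by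
        rw [hC1 k hjk, Finset.card_insert_of_notMem (hiC k)]
      omega
    · have e1 : ((Finset.univ.filter
          (fun a => inv' a = a ∧ sgn' a = true ∧ a.val < k))).card =
          ((Finset.univ.filter
          (fun a : Fin (p + q) => γ.invol a = a ∧ γ.sgn a = true ∧ a.val < k))).card := by
        rw [hFp k, Finset.erase_eq_of_notMem (hiFpnot k hik)]
      rw [e1, hC2 k (by omega)]
  have hrm : ∀ k, γ'.rankM k = γ.rankM k := by
    intro k
    simp only [Clan.rankM, hγinv, hγsgn]
    by_cases hjk : j.val < k
    · have e1 := card_erase_succ (hFm k) (hjFm k hjk)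
      have e2 : (Finset.univ.filter
          (fun a => a.val < (inv' a).val ∧ (inv' a).val < k)).card =
          (Finset.univ.filter
          (fun a : Fin (p + q) => a.val < (γ.invol a).val ∧ (γ.invol a).val < k)).card + 1 := by
        rw [hC1 k hjk, Finset.card_insert_of_notMem (hiC k)]
      omega
    · have e1 : ((Finset.univ.filter
          (fun a => inv' a = a ∧ sgn' a = false ∧ a.val < k))).card =
          ((Finset.univ.filter
          (fun a : Fin (p + q) => γ.invol a = a ∧ γ.sgn a = false ∧ a.val < k))).card := by
        rw [hFm k, Finset.erase_eq_of_notMem (hjFmnot k hjk)]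
      rw [e1, hC2 k hjk]
  have hrj1 : ∀ k l, k < l → i.val < k → l ≤ j.val → γ'.rankJ k l = γ.rankJ k l + 1 := by
    intro k l hkl hik hlj
    simp only [Clan.rankJ, hγinv]
    rw [hJ1 k l hkl hik hlj, Finset.card_insert_of_notMem (hiJ k l hkl)]
  have hrj2 : ∀ k l, k < l → ¬(i.val < k ∧ l ≤ j.val) → γ'.rankJ k l = γ.rankJ k l := by
    intro k l hkl hcond
    simp only [Clan.rankJ, hγinv]
    rw [hJ2 k l hkl hcond]
  refine ⟨γ', hinv'_i, ?_, ⟨⟨?_, ?_, ?_⟩, ?_⟩, hrp1, hrp2, hrm, hrj1, hrj2⟩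
  · intro a hai haj
    exact ⟨hinv'_other a hai haj, hsgn'_other a haj⟩
  · intro k
    by_cases hk : i.val < k ∧ k ≤ j.val
    · have := hrp1 k hk.1 hk.2; omega
    · exact le_of_eq (hrp2 k hk)
  · intro k
    exact le_of_eq (hrm k)
  · intro k l hkl
    by_cases hc : i.val < k ∧ l ≤ j.val
    · rw [hrj1 k l hkl hc.1 hc.2]; omega
    · rw [hrj2 k l hkl hc]
  · intro h
    have h2 : γ.invol i = j := by rw [h]; exact hinv'_i
    rw [hi] at h2
    exact hne h2
end

section
/- If γ' is obtained from a clan γ by the move 1122 → 1212, i.e., γ has 2-cycles {i,j} and {k,l} with i < j < k < l, and γ' replaces them with 2-cycles {i,k} and {j,l} (all else unchanged), then γ < γ' in the combinatorial Bruhat order. The rank-number differences are exactly: γ'(s;+) = γ(s;+) - 1 and γ'(s;-) = γ(s;-) - 1 for j ≤ s ≤ k-1; γ'(s;t) = γ(s;t) + 1 for i ≤ s < j ≤ t < k and for j ≤ s < k ≤ t < l; γ'(s;t) = γ(s;t) + 2 for j ≤ s < t < k; all other rank numbers equal. -/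
open Finset

private lemma sum_split {n : ℕ} (f g : Fin n → ℕ) (S : Finset (Fin n))
    (h : ∀ a ∉ S, f a = g a) :
    (∑ a, f a) + ∑ a ∈ S, g a = (∑ a, g a) + ∑ a ∈ S, f a := by
  classical
  rw [← Finset.sum_add_sum_compl S f, ← Finset.sum_add_sum_compl S g]
  have hc : ∑ a ∈ Sᶜ, f a = ∑ a ∈ Sᶜ, g a :=
    Finset.sum_congr rfl fun a ha => h a (Finset.mem_compl.mp ha)
  rw [hc]; ring

private lemma count_quad {n : ℕ} (i j k l : Fin n) (hij : i ≠ j) (hik : i ≠ k)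
    (hil : i ≠ l) (hjk : j ≠ k) (hjl : j ≠ l) (hkl : k ≠ l)
    (P Q : Fin n → Prop) [DecidablePred P] [DecidablePred Q]
    (h : ∀ a, a ≠ i → a ≠ j → a ≠ k → a ≠ l → (P a ↔ Q a)) :
    (Finset.univ.filter P).card + ((if Q i then 1 else 0) + (if Q j then 1 else 0)
      + (if Q k then 1 else 0) + (if Q l then 1 else 0)) =
    (Finset.univ.filter Q).card + ((if P i then 1 else 0) + (if P j then 1 else 0)
      + (if P k then 1 else 0) + (if P l then 1 else 0)) := by
  classical
  have expand : ∀ (R : Fin n → Prop) (_ : DecidablePred R),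
      (∑ a ∈ ({i, j, k, l} : Finset (Fin n)), (if R a then 1 else 0)) =
      (if R i then 1 else 0) + (if R j then 1 else 0) + (if R k then 1 else 0)
        + (if R l then 1 else 0) := by
    intro R _
    rw [Finset.sum_insert (by simp [Finset.mem_insert, hij, hik, hil]),
        Finset.sum_insert (by simp [Finset.mem_insert, hjk, hjl]),
        Finset.sum_insert (by simp [hkl]), Finset.sum_singleton]
    ring
  have hsplit := sum_split (fun a => if P a then 1 else 0) (fun a => if Q a then 1 else 0)
      ({i, j, k, l} : Finset (Fin n)) (by
        intro a ha
        simp only [Finset.mem_insert, Finset.mem_singleton, not_or] at ha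
        simp [h a ha.1 ha.2.1 ha.2.2.1 ha.2.2.2])
  rw [expand _ inferInstance, expand _ inferInstance] at hsplit
  rw [Finset.card_filter, Finset.card_filter]
  exact hsplit

set_option maxHeartbeats 1000000 in
/-- the move `1122 → 1212`.  If `γ` has 2-cycles `{i,j}` and `{k,l}` with
`i < j < k < l`, and `γ'` replaces them by `{i,k}` and `{j,l}` (all else unchanged), then
`γ < γ'`.  The rank-number differences are exactly: `γ'(s;±) = γ(s;±) - 1` for
`j ≤ s ≤ k-1` (1-based); `γ'(s;t) = γ(s;t) + 1` for `i ≤ s < j ≤ t < k` and for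
`j ≤ s < k ≤ t < l`; `γ'(s;t) = γ(s;t) + 2` for `j ≤ s < t < k`; all others equal. -/
theorem move_1122_to_1212 {p q : ℕ} (γ : Clan p q) (i j k l : Fin (p + q))
    (hij : i < j) (hjk : j < k) (hkl : k < l)
    (hc1 : γ.invol i = j) (hc2 : γ.invol k = l) :
    ∃ γ' : Clan p q,
      γ'.invol i = k ∧ γ'.invol j = l ∧
      (∀ a, a ≠ i → a ≠ j → a ≠ k → a ≠ l → γ'.invol a = γ.invol a) ∧
      (∀ a, γ'.sgn a = γ.sgn a) ∧
      Clan.lt γ γ' ∧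
      (∀ s, j.val < s → s ≤ k.val →
        γ'.rankP s + 1 = γ.rankP s ∧ γ'.rankM s + 1 = γ.rankM s) ∧
      (∀ s, ¬(j.val < s ∧ s ≤ k.val) →
        γ'.rankP s = γ.rankP s ∧ γ'.rankM s = γ.rankM s) ∧
      (∀ s t, s < t →
        γ'.rankJ s t = γ.rankJ s t
          + (if i.val < s ∧ s ≤ j.val ∧ j.val < t ∧ t ≤ k.val then 1 else 0)
          + (if j.val < s ∧ s ≤ k.val ∧ k.val < t ∧ t ≤ l.val then 1 else 0)
          + 2 * (if j.val < s ∧ t ≤ k.val then 1 else 0)) := by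
  classical
  have hij' : i.val < j.val := hij
  have hjk' : j.val < k.val := hjk
  have hkl' : k.val < l.val := hkl
  have hne_ij : i ≠ j := Fin.ne_of_lt hij
  have hne_ik : i ≠ k := Fin.ne_of_lt (hij.trans hjk)
  have hne_il : i ≠ l := Fin.ne_of_lt ((hij.trans hjk).trans hkl)
  have hne_jk : j ≠ k := Fin.ne_of_lt hjk
  have hne_jl : j ≠ l := Fin.ne_of_lt (hjk.trans hkl)
  have hne_kl : k ≠ l := Fin.ne_of_lt hkl
  have hji : γ.invol j = i := by rw [← hc1, γ.invol_invol]
  have hlk : γ.invol l = k := by rw [← hc2, γ.invol_invol]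
  set inv' : Equiv.Perm (Fin (p + q)) :=
    ((Equiv.swap j k).trans γ.invol).trans (Equiv.swap j k) with hinv'def
  have hv : ∀ a, inv' a = Equiv.swap j k (γ.invol (Equiv.swap j k a)) := fun _ => rfl
  have hei : Equiv.swap j k i = i := Equiv.swap_apply_of_ne_of_ne hne_ij hne_ik
  have hej : Equiv.swap j k j = k := Equiv.swap_apply_left j k
  have hek : Equiv.swap j k k = j := Equiv.swap_apply_right j k
  have hel : Equiv.swap j k l = l :=
    Equiv.swap_apply_of_ne_of_ne (Ne.symm hne_jl) (Ne.symm hne_kl)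
  have hvi : inv' i = k := by rw [hv, hei, hc1, hej]
  have hvj : inv' j = l := by rw [hv, hej, hc2, hel]
  have hvk : inv' k = i := by rw [hv, hek, hji, hei]
  have hvl : inv' l = j := by rw [hv, hel, hlk, hek]
  have hoff : ∀ a, a ≠ i → a ≠ j → a ≠ k → a ≠ l → inv' a = γ.invol a := by
    intro a h1 h2 h3 h4
    have hea : Equiv.swap j k a = a := Equiv.swap_apply_of_ne_of_ne h2 h3
    have h5 : γ.invol a ≠ j := by
      intro hh; apply h1; rw [← γ.invol_invol a, hh, hji]
    have h6 : γ.invol a ≠ k := by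
      intro hh; apply h4; rw [← γ.invol_invol a, hh, hc2]
    rw [hv, hea, Equiv.swap_apply_of_ne_of_ne h5 h6]
  have hinv2 : ∀ a, inv' (inv' a) = a := by
    intro a
    rw [hv, hv, Equiv.swap_apply_self, γ.invol_invol, Equiv.swap_apply_self]
  have hfix : ∀ a, (inv' a = a ↔ γ.invol a = a) := by
    intro a
    by_cases h1 : a = i
    · subst h1; rw [hvi, hc1]
      exact ⟨fun h => absurd h (Ne.symm hne_ik), fun h => absurd h (Ne.symm hne_ij)⟩
    by_cases h2 : a = j
    · subst h2; rw [hvj, hji]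
      exact ⟨fun h => absurd h (Ne.symm hne_jl), fun h => absurd h hne_ij⟩
    by_cases h3 : a = k
    · subst h3; rw [hvk, hc2]
      exact ⟨fun h => absurd h hne_ik, fun h => absurd h (Ne.symm hne_kl)⟩
    by_cases h4 : a = l
    · subst h4; rw [hvl, hlk]
      exact ⟨fun h => absurd h hne_jl, fun h => absurd h hne_kl⟩
    · rw [hoff a h1 h2 h3 h4]
  have hbal :
      ((Finset.univ : Finset (Fin (p + q))).filter
          (fun a => inv' a = a ∧ γ.sgn a = true)).card + q =
      ((Finset.univ : Finset (Fin (p + q))).filter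
          (fun a => inv' a = a ∧ γ.sgn a = false)).card + p := by
    have e1 : (Finset.univ.filter (fun a => inv' a = a ∧ γ.sgn a = true))
        = (Finset.univ.filter (fun a => γ.invol a = a ∧ γ.sgn a = true)) := by
      ext a; simp [hfix a]
    have e2 : (Finset.univ.filter (fun a => inv' a = a ∧ γ.sgn a = false))
        = (Finset.univ.filter (fun a => γ.invol a = a ∧ γ.sgn a = false)) := by
      ext a; simp [hfix a]
    rw [e1, e2]; exact γ.balance
  set γ' : Clan p q :=
    { invol := inv', invol_invol := hinv2, sgn := γ.sgn,
      sgn_default := fun a ha => γ.sgn_default a (fun h => ha ((hfix a).mpr h)),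
      balance := hbal } with hγ'def
  have hGinv : γ'.invol = inv' := rfl
  have hGsgn : γ'.sgn = γ.sgn := rfl
  -- key identity for the 2-cycle counting term, common to rankP and rankM
  have keyC : ∀ s : ℕ,
      ((Finset.univ : Finset (Fin (p + q))).filter
          (fun a => a.val < (inv' a).val ∧ (inv' a).val < s)).card
        + (if j.val < s then 1 else 0) =
      ((Finset.univ : Finset (Fin (p + q))).filter
          (fun a => a.val < (γ.invol a).val ∧ (γ.invol a).val < s)).card
        + (if k.val < s then 1 else 0) := by
    intro s
    have hq := count_quad i j k l hne_ij hne_ik hne_il hne_jk hne_jl hne_kl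
        (fun a => a.val < (inv' a).val ∧ (inv' a).val < s)
        (fun a => a.val < (γ.invol a).val ∧ (γ.invol a).val < s)
        (fun a h1 h2 h3 h4 => by simp only [hoff a h1 h2 h3 h4])
    simp only [hvi, hvj, hvk, hvl, hc1, hji, hc2, hlk] at hq
    have n1 : ¬ (j.val < i.val) := by omega
    have n2 : ¬ (l.val < k.val) := by omega
    have n3 : ¬ (k.val < i.val) := by omega
    have n4 : ¬ (l.val < j.val) := by omega
    have hik' : i.val < k.val := by omega
    have hjl' : j.val < l.val := by omega
    simp only [hij', hjk', hkl', hik', hjl', n1, n2, n3, n4, true_and, false_and,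
      if_false, if_true, ite_true, ite_false, add_zero, zero_add] at hq
    split_ifs at hq ⊢ <;> omega
  have keyP : ∀ s : ℕ, γ'.rankP s + (if j.val < s then 1 else 0)
      = γ.rankP s + (if k.val < s then 1 else 0) := by
    intro s
    have hfixset : (Finset.univ.filter
          (fun a => γ'.invol a = a ∧ γ'.sgn a = true ∧ a.val < s))
        = (Finset.univ.filter
          (fun a => γ.invol a = a ∧ γ.sgn a = true ∧ a.val < s)) := by
      ext a; simp only [Finset.mem_filter, hGinv, hGsgn, hfix a]
    unfold Clan.rankP
    rw [hfixset]
    have := keyC s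
    simp only [hGinv]
    omega
  have keyM : ∀ s : ℕ, γ'.rankM s + (if j.val < s then 1 else 0)
      = γ.rankM s + (if k.val < s then 1 else 0) := by
    intro s
    have hfixset : (Finset.univ.filter
          (fun a => γ'.invol a = a ∧ γ'.sgn a = false ∧ a.val < s))
        = (Finset.univ.filter
          (fun a => γ.invol a = a ∧ γ.sgn a = false ∧ a.val < s)) := by
      ext a; simp only [Finset.mem_filter, hGinv, hGsgn, hfix a]
    unfold Clan.rankM
    rw [hfixset]
    have := keyC s
    simp only [hGinv]
    omega
  have keyJ : ∀ s t : ℕ, s < t →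
      γ'.rankJ s t + ((if i.val < s ∧ t ≤ j.val then 1 else 0)
        + (if k.val < s ∧ t ≤ l.val then 1 else 0))
      = γ.rankJ s t + ((if i.val < s ∧ t ≤ k.val then 1 else 0)
        + (if j.val < s ∧ t ≤ l.val then 1 else 0)) := by
    intro s t hst
    have hq := count_quad i j k l hne_ij hne_ik hne_il hne_jk hne_jl hne_kl
        (fun a => a.val < s ∧ t ≤ (inv' a).val)
        (fun a => a.val < s ∧ t ≤ (γ.invol a).val)
        (fun a h1 h2 h3 h4 => by simp only [hoff a h1 h2 h3 h4])
    simp only [hvi, hvj, hvk, hvl, hc1, hji, hc2, hlk] at hq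
    have n5 : ¬ (j.val < s ∧ t ≤ i.val) := by omega
    have n6 : ¬ (l.val < s ∧ t ≤ k.val) := by omega
    have n7 : ¬ (k.val < s ∧ t ≤ i.val) := by omega
    have n8 : ¬ (l.val < s ∧ t ≤ j.val) := by omega
    simp only [n5, n6, n7, n8, if_false, ite_false, add_zero, zero_add] at hq
    unfold Clan.rankJ
    simp only [hGinv]
    split_ifs at hq ⊢ <;> omega
  refine ⟨γ', hvi, hvj, hoff, fun _ => rfl, ?_, ?_, ?_, ?_⟩
  · constructor
    · refine ⟨fun s => ?_, fun s => ?_, fun s t hst => ?_⟩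
      · have := keyP s; split_ifs at this <;> omega
      · have := keyM s; split_ifs at this <;> omega
      · have := keyJ s t hst; split_ifs at this <;> omega
    · intro h
      have hh : γ.invol i = γ'.invol i := by rw [h]
      rw [hc1, hGinv, hvi] at hh
      exact hne_jk hh
  · intro s hs1 hs2
    have h1 := keyP s; have h2 := keyM s
    split_ifs at h1 h2 <;> omega
  · intro s hs
    have h1 := keyP s; have h2 := keyM s
    split_ifs at h1 h2 <;> omega
  · intro s t hst
    have := keyJ s t hst
    split_ifs at this ⊢ <;> omega
end

section
/- If γ' is obtained from a clan γ by the move 1212 → 1221, i.e., γ has 2-cycles {i,k} and {j,l} with i < j < k < l, and γ' replaces them with 2-cycles {i,l} and {j,k}, then γ < γ' in the combinatorial Bruhat order; the only rank-number changes are γ'(s;t) = γ(s;t) + 1 for pairs s < t with i ≤ s < j and k ≤ t < l. -/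
open Finset

private lemma sum_four_aux {n : ℕ} (i j k l : Fin n)
    (hij : i ≠ j) (hik : i ≠ k) (hil : i ≠ l)
    (hjk : j ≠ k) (hjl : j ≠ l) (hkl : k ≠ l)
    (f g : Fin n → ℕ) (h : ∀ a, a ≠ i → a ≠ j → a ≠ k → a ≠ l → f a = g a) :
    (∑ a, f a) + (g i + g j + g k + g l) = (∑ a, g a) + (f i + f j + f k + f l) := by
  have hS : ∀ F : Fin n → ℕ,
      ∑ a ∈ ({i, j, k, l} : Finset (Fin n)), F a = F i + F j + F k + F l := by
    intro F
    rw [Finset.sum_insert (by simp [hij, hik, hil]),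
        Finset.sum_insert (by simp [hjk, hjl]),
        Finset.sum_insert (by simp [hkl]), Finset.sum_singleton]
    ring
  have hcompl : ∑ a ∈ ({i, j, k, l} : Finset (Fin n))ᶜ, f a
      = ∑ a ∈ ({i, j, k, l} : Finset (Fin n))ᶜ, g a := by
    apply Finset.sum_congr rfl
    intro a ha
    simp only [Finset.mem_compl, Finset.mem_insert, Finset.mem_singleton] at ha
    push_neg at ha
    exact h a ha.1 ha.2.1 ha.2.2.1 ha.2.2.2
  have h1 := Finset.sum_add_sum_compl ({i, j, k, l} : Finset (Fin n)) f
  have h2 := Finset.sum_add_sum_compl ({i, j, k, l} : Finset (Fin n)) g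
  rw [hS f] at h1
  rw [hS g] at h2
  omega

set_option maxHeartbeats 1000000 in
/-- the move `1212 → 1221`.  If `γ` has 2-cycles `{i,k}` and `{j,l}` with
`i < j < k < l`, and `γ'` replaces them by `{i,l}` and `{j,k}`, then `γ < γ'`; the only
rank-number changes are `γ'(s;t) = γ(s;t) + 1` for the pairs `s < t` with `i ≤ s < j`
and `k ≤ t < l` (1-based). -/
theorem move_1212_to_1221 {p q : ℕ} (γ : Clan p q) (i j k l : Fin (p + q))
    (hij : i < j) (hjk : j < k) (hkl : k < l)
    (hc1 : γ.invol i = k) (hc2 : γ.invol j = l) :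
    ∃ γ' : Clan p q,
      γ'.invol i = l ∧ γ'.invol j = k ∧
      (∀ a, a ≠ i → a ≠ j → a ≠ k → a ≠ l → γ'.invol a = γ.invol a) ∧
      (∀ a, γ'.sgn a = γ.sgn a) ∧
      Clan.lt γ γ' ∧
      (∀ s, γ'.rankP s = γ.rankP s ∧ γ'.rankM s = γ.rankM s) ∧
      (∀ s t, s < t →
        γ'.rankJ s t = γ.rankJ s t
          + (if i.val < s ∧ s ≤ j.val ∧ k.val < t ∧ t ≤ l.val then 1 else 0)) := by
  classical
  have hki : γ.invol k = i := by have h := γ.invol_invol i; rw [hc1] at h; exact h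
  have hlj : γ.invol l = j := by have h := γ.invol_invol j; rw [hc2] at h; exact h
  have vij : i.val < j.val := hij
  have vjk : j.val < k.val := hjk
  have vkl : k.val < l.val := hkl
  have hij' : i ≠ j := Fin.ne_of_lt hij
  have hik' : i ≠ k := Fin.ne_of_lt (lt_trans hij hjk)
  have hil' : i ≠ l := Fin.ne_of_lt (lt_trans (lt_trans hij hjk) hkl)
  have hjk' : j ≠ k := Fin.ne_of_lt hjk
  have hjl' : j ≠ l := Fin.ne_of_lt (lt_trans hjk hkl)
  have hkl' : k ≠ l := Fin.ne_of_lt hkl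
  obtain ⟨σ, hσdef⟩ : ∃ σ : Equiv.Perm (Fin (p + q)), σ = Equiv.swap k l := ⟨_, rfl⟩
  obtain ⟨E, hEdef⟩ : ∃ E : Equiv.Perm (Fin (p + q)), E = σ.trans (γ.invol.trans σ) :=
    ⟨_, rfl⟩
  have hEapp : ∀ a, E a = σ (γ.invol (σ a)) := fun a => by rw [hEdef]; rfl
  have hσo : ∀ a : Fin (p + q), a ≠ k → a ≠ l → σ a = a := fun a h1 h2 =>
    by rw [hσdef]; exact Equiv.swap_apply_of_ne_of_ne h1 h2
  have hEi : E i = l := by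
    rw [hEapp, hσo i hik' hil', hc1, hσdef, Equiv.swap_apply_left]
  have hEj : E j = k := by
    rw [hEapp, hσo j hjk' hjl', hc2, hσdef, Equiv.swap_apply_right]
  have hEk : E k = j := by
    rw [hEapp]
    rw [show σ k = l by rw [hσdef]; exact Equiv.swap_apply_left k l, hlj, hσo j hjk' hjl']
  have hEl : E l = i := by
    rw [hEapp]
    rw [show σ l = k by rw [hσdef]; exact Equiv.swap_apply_right k l, hki, hσo i hik' hil']
  have hfar : ∀ a, a ≠ i → a ≠ j → a ≠ k → a ≠ l → E a = γ.invol a := by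
    intro a h1 h2 h3 h4
    have hk : γ.invol a ≠ k := by
      intro hh
      have := γ.invol_invol a
      rw [hh, hki] at this
      exact h1 this.symm
    have hl : γ.invol a ≠ l := by
      intro hh
      have := γ.invol_invol a
      rw [hh, hlj] at this
      exact h2 this.symm
    rw [hEapp, hσo a h3 h4, hσo _ hk hl]
  have hinv : ∀ a, E (E a) = a := by
    intro a
    by_cases h1 : a = i
    · rw [h1, hEi, hEl]
    by_cases h2 : a = j
    · rw [h2, hEj, hEk]
    by_cases h3 : a = k
    · rw [h3, hEk, hEj]
    by_cases h4 : a = l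
    · rw [h4, hEl, hEi]
    have hk : γ.invol a ≠ k := by
      intro hh; have := γ.invol_invol a; rw [hh, hki] at this; exact h1 this.symm
    have hl : γ.invol a ≠ l := by
      intro hh; have := γ.invol_invol a; rw [hh, hlj] at this; exact h2 this.symm
    have hi : γ.invol a ≠ i := by
      intro hh; have := γ.invol_invol a; rw [hh, hc1] at this; exact h3 this.symm
    have hj : γ.invol a ≠ j := by
      intro hh; have := γ.invol_invol a; rw [hh, hc2] at this; exact h4 this.symm
    rw [hfar a h1 h2 h3 h4, hfar _ hi hj hk hl, γ.invol_invol]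
  have hsd : ∀ a, E a ≠ a → γ.sgn a = true := by
    intro a ha
    by_cases h1 : a = i
    · exact γ.sgn_default a (by rw [h1, hc1]; exact hik'.symm)
    by_cases h2 : a = j
    · exact γ.sgn_default a (by rw [h2, hc2]; exact hjl'.symm)
    by_cases h3 : a = k
    · exact γ.sgn_default a (by rw [h3, hki]; exact hik')
    by_cases h4 : a = l
    · exact γ.sgn_default a (by rw [h4, hlj]; exact hjl')
    · exact γ.sgn_default a (by rw [← hfar a h1 h2 h3 h4]; exact ha)
  -- fixed-point filters agree
  have hfixpt : ∀ a : Fin (p + q), (E a = a) ↔ (γ.invol a = a) := by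
    intro a
    by_cases h1 : a = i
    · subst h1; rw [hEi, hc1]
      simp [hil'.symm, hik'.symm]
    by_cases h2 : a = j
    · subst h2; rw [hEj, hc2]
      simp [hjk'.symm, hjl'.symm]
    by_cases h3 : a = k
    · subst h3; rw [hEk, hki]
      simp [hjk', hik']
    by_cases h4 : a = l
    · subst h4; rw [hEl, hlj]
      simp [hil', hjl']
    · rw [hfar a h1 h2 h3 h4]
  have hbal :
      ((Finset.univ : Finset (Fin (p + q))).filter
          (fun a => E a = a ∧ γ.sgn a = true)).card + q =
      ((Finset.univ : Finset (Fin (p + q))).filter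
          (fun a => E a = a ∧ γ.sgn a = false)).card + p := by
    have e1 : ∀ b : Bool,
        ((Finset.univ : Finset (Fin (p + q))).filter (fun a => E a = a ∧ γ.sgn a = b)) =
        ((Finset.univ : Finset (Fin (p + q))).filter
          (fun a => γ.invol a = a ∧ γ.sgn a = b)) := by
      intro b
      apply Finset.filter_congr
      intro a _
      rw [hfixpt a]
    rw [e1 true, e1 false]
    exact γ.balance
  obtain ⟨γ', hE', hs'⟩ :
      ∃ γ' : Clan p q, γ'.invol = E ∧ γ'.sgn = γ.sgn :=
    ⟨⟨E, hinv, γ.sgn, hsd, hbal⟩, rfl, rfl⟩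
  have hrP : ∀ s, γ'.rankP s = γ.rankP s ∧ γ'.rankM s = γ.rankM s := by
    intro s
    have hfix : ∀ b : Bool,
        ((Finset.univ : Finset (Fin (p + q))).filter
          (fun a => γ'.invol a = a ∧ γ'.sgn a = b ∧ a.val < s)) =
        ((Finset.univ : Finset (Fin (p + q))).filter
          (fun a => γ.invol a = a ∧ γ.sgn a = b ∧ a.val < s)) := by
      intro b
      apply Finset.filter_congr
      intro a _
      rw [hE', hs', hfixpt a]
    have hpair :
        ((Finset.univ : Finset (Fin (p + q))).filter
          (fun a => a.val < (γ'.invol a).val ∧ (γ'.invol a).val < s)).card =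
        ((Finset.univ : Finset (Fin (p + q))).filter
          (fun a => a.val < (γ.invol a).val ∧ (γ.invol a).val < s)).card := by
      rw [hE', Finset.card_filter, Finset.card_filter]
      have key := sum_four_aux i j k l hij' hik' hil' hjk' hjl' hkl'
        (fun a => if a.val < (E a).val ∧ (E a).val < s then 1 else 0)
        (fun a => if a.val < (γ.invol a).val ∧ (γ.invol a).val < s then 1 else 0)
        (fun a h1 h2 h3 h4 => by simp only [hfar a h1 h2 h3 h4])
      simp only [hEi, hEj, hEk, hEl, hc1, hc2, hki, hlj] at key
      have z1 : (if (k : Fin (p+q)).val < (i : Fin (p+q)).val ∧ (i : Fin (p+q)).val < s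
          then (1:ℕ) else 0) = 0 := if_neg (by omega)
      have z2 : (if (l : Fin (p+q)).val < (j : Fin (p+q)).val ∧ (j : Fin (p+q)).val < s
          then (1:ℕ) else 0) = 0 := if_neg (by omega)
      have z3 : (if (k : Fin (p+q)).val < (j : Fin (p+q)).val ∧ (j : Fin (p+q)).val < s
          then (1:ℕ) else 0) = 0 := if_neg (by omega)
      have z4 : (if (l : Fin (p+q)).val < (i : Fin (p+q)).val ∧ (i : Fin (p+q)).val < s
          then (1:ℕ) else 0) = 0 := if_neg (by omega)
      rw [z1, z2, z3, z4] at key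
      have e1 : (if (i : Fin (p+q)).val < (l : Fin (p+q)).val ∧ (l : Fin (p+q)).val < s
          then (1:ℕ) else 0) = (if (l : Fin (p+q)).val < s then 1 else 0) := by
        split_ifs <;> omega
      have e2 : (if (j : Fin (p+q)).val < (k : Fin (p+q)).val ∧ (k : Fin (p+q)).val < s
          then (1:ℕ) else 0) = (if (k : Fin (p+q)).val < s then 1 else 0) := by
        split_ifs <;> omega
      have e3 : (if (i : Fin (p+q)).val < (k : Fin (p+q)).val ∧ (k : Fin (p+q)).val < s
          then (1:ℕ) else 0) = (if (k : Fin (p+q)).val < s then 1 else 0) := by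
        split_ifs <;> omega
      have e4 : (if (j : Fin (p+q)).val < (l : Fin (p+q)).val ∧ (l : Fin (p+q)).val < s
          then (1:ℕ) else 0) = (if (l : Fin (p+q)).val < s then 1 else 0) := by
        split_ifs <;> omega
      rw [e1, e2, e3, e4] at key
      omega
    constructor
    · show _ + _ = _ + _
      rw [hfix true, hpair]
    · show _ + _ = _ + _
      rw [hfix false, hpair]
  have hrJ : ∀ s t, s < t → γ'.rankJ s t = γ.rankJ s t
      + (if i.val < s ∧ s ≤ j.val ∧ k.val < t ∧ t ≤ l.val then 1 else 0) := by
    intro s t hst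
    unfold Clan.rankJ
    rw [hE', Finset.card_filter, Finset.card_filter]
    have key := sum_four_aux i j k l hij' hik' hil' hjk' hjl' hkl'
      (fun a => if a.val < s ∧ t ≤ (E a).val then 1 else 0)
      (fun a => if a.val < s ∧ t ≤ (γ.invol a).val then 1 else 0)
      (fun a h1 h2 h3 h4 => by simp only [hfar a h1 h2 h3 h4])
    simp only [hEi, hEj, hEk, hEl, hc1, hc2, hki, hlj] at key
    have z1 : (if (k : Fin (p+q)).val < s ∧ t ≤ (j : Fin (p+q)).val
        then (1:ℕ) else 0) = 0 := if_neg (by omega)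
    have z2 : (if (l : Fin (p+q)).val < s ∧ t ≤ (i : Fin (p+q)).val
        then (1:ℕ) else 0) = 0 := if_neg (by omega)
    have z3 : (if (k : Fin (p+q)).val < s ∧ t ≤ (i : Fin (p+q)).val
        then (1:ℕ) else 0) = 0 := if_neg (by omega)
    have z4 : (if (l : Fin (p+q)).val < s ∧ t ≤ (j : Fin (p+q)).val
        then (1:ℕ) else 0) = 0 := if_neg (by omega)
    rw [z1, z2, z3, z4] at key
    have harith :
        (if (i : Fin (p+q)).val < s ∧ t ≤ (l : Fin (p+q)).val then (1:ℕ) else 0)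
        + (if (j : Fin (p+q)).val < s ∧ t ≤ (k : Fin (p+q)).val then (1:ℕ) else 0)
        = (if (i : Fin (p+q)).val < s ∧ t ≤ (k : Fin (p+q)).val then (1:ℕ) else 0)
        + (if (j : Fin (p+q)).val < s ∧ t ≤ (l : Fin (p+q)).val then (1:ℕ) else 0)
        + (if i.val < s ∧ s ≤ j.val ∧ k.val < t ∧ t ≤ l.val then (1:ℕ) else 0) := by
      split_ifs <;> omega
    omega
  refine ⟨γ', by rw [hE']; exact hEi, by rw [hE']; exact hEj,
    fun a h1 h2 h3 h4 => by rw [hE']; exact hfar a h1 h2 h3 h4,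
    fun a => by rw [hs'], ⟨⟨?_, ?_, ?_⟩, ?_⟩, hrP, hrJ⟩
  · exact fun s => le_of_eq (hrP s).1
  · exact fun s => le_of_eq (hrP s).2
  · intro s t hst
    rw [hrJ s t hst]
    exact Nat.le_add_right _ _
  · intro hgg
    have hcontra : γ.invol i = γ'.invol i := by rw [hgg]
    rw [hc1, hE', hEi] at hcontra
    exact hkl' hcontra
end

section
/- If γ' is obtained from a clan γ by the move 1122 → 1+-1, i.e., γ has 2-cycles {i,j} and {k,l} with i < j < k < l, and γ' replaces them with a 2-cycle {i,l}, a + fixed point at j, and a - fixed point at k, then γ < γ' in the combinatorial Bruhat order. -/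
open Finset

lemma key {n : ℕ} (P Q : Fin n → Prop) [DecidablePred P] [DecidablePred Q]
    (S : Finset (Fin n)) (h : ∀ a ∉ S, (P a ↔ Q a)) :
    (univ.filter P).card + (S.filter Q).card =
      (univ.filter Q).card + (S.filter P).card := by
  have hu : Sᶜ ∪ S = univ := by rw [union_comm]; exact union_compl S
  have hsplit : ∀ (R : Fin n → Prop) [DecidablePred R],
      (univ.filter R).card = ((Sᶜ).filter R).card + (S.filter R).card := by
    intro R _
    rw [← hu, filter_union, card_union_of_disjoint]
    exact disjoint_filter_filter disjoint_compl_left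
  rw [hsplit P, hsplit Q]
  have : (Sᶜ).filter P = (Sᶜ).filter Q := by
    apply filter_congr
    intro a ha
    exact h a (mem_compl.mp ha)
  rw [this]; ring

lemma card4 {n : ℕ} (P : Fin n → Prop) [DecidablePred P] (i j k l : Fin n)
    (hij : i ≠ j) (hik : i ≠ k) (hil : i ≠ l) (hjk : j ≠ k) (hjl : j ≠ l) (hkl : k ≠ l) :
    (({i, j, k, l} : Finset (Fin n)).filter P).card =
      (if P i then 1 else 0) + (if P j then 1 else 0) +
      (if P k then 1 else 0) + (if P l then 1 else 0) := by
  rw [card_filter]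
  rw [sum_insert (by simp [hij, hik, hil]), sum_insert (by simp [hjk, hjl]),
    sum_insert (by simp [hkl]), sum_singleton]
  ring

set_option maxHeartbeats 2000000 in
/-- the move `1122 → 1+-1`.  If `γ` has 2-cycles `{i,j}` and `{k,l}` with
`i < j < k < l`, and `γ'` replaces them by the 2-cycle `{i,l}`, a `+` fixed point at `j`
and a `-` fixed point at `k`, then `γ < γ'` in the combinatorial Bruhat order. -/
theorem move_1122_to_1pm1 {p q : ℕ} (γ : Clan p q) (i j k l : Fin (p + q))
    (hij : i < j) (hjk : j < k) (hkl : k < l)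
    (hc1 : γ.invol i = j) (hc2 : γ.invol k = l) :
    ∃ γ' : Clan p q,
      γ'.invol i = l ∧ γ'.invol j = j ∧ γ'.sgn j = true ∧
      γ'.invol k = k ∧ γ'.sgn k = false ∧
      (∀ a, a ≠ i → a ≠ j → a ≠ k → a ≠ l → γ'.invol a = γ.invol a ∧ γ'.sgn a = γ.sgn a) ∧
      Clan.lt γ γ' := by
  have hij' : i.val < j.val := hij
  have hjk' : j.val < k.val := hjk
  have hkl' : k.val < l.val := hkl
  have hik : i < k := hij.trans hjk
  have hil : i < l := hik.trans hkl
  have hjl : j < l := hjk.trans hkl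
  have hijne : i ≠ j := Fin.ne_of_lt hij
  have hikne : i ≠ k := Fin.ne_of_lt (hij.trans hjk)
  have hilne : i ≠ l := Fin.ne_of_lt ((hij.trans hjk).trans hkl)
  have hjkne : j ≠ k := Fin.ne_of_lt hjk
  have hjlne : j ≠ l := Fin.ne_of_lt (hjk.trans hkl)
  have hklne : k ≠ l := Fin.ne_of_lt hkl
  have hji : γ.invol j = i := by rw [← hc1, γ.invol_invol]
  have hlk : γ.invol l = k := by rw [← hc2, γ.invol_invol]
  -- the new involution as a function
  set f : Fin (p + q) → Fin (p + q) := fun a =>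
    if a = i then l else if a = l then i else
    if a = j then j else if a = k then k else γ.invol a with hf
  have hfi : f i = l := by simp [hf]
  have hfl : f l = i := by simp [hf, hilne.symm]
  have hfj : f j = j := by simp [hf, hijne.symm, hjlne]
  have hfk : f k = k := by simp [hf, hikne.symm, hklne, hjkne.symm]
  have hfo : ∀ a, a ≠ i → a ≠ j → a ≠ k → a ≠ l → f a = γ.invol a := by
    intro a h1 h2 h3 h4; simp [hf, h1, h2, h3, h4]
  have hout : ∀ a, a ≠ i → a ≠ j → a ≠ k → a ≠ l →
      γ.invol a ≠ i ∧ γ.invol a ≠ j ∧ γ.invol a ≠ k ∧ γ.invol a ≠ l := by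
    intro a h1 h2 h3 h4
    refine ⟨?_, ?_, ?_, ?_⟩ <;> intro he
    · exact h2 (by rw [← γ.invol_invol a, he, hc1])
    · exact h1 (by rw [← γ.invol_invol a, he, hji])
    · exact h4 (by rw [← γ.invol_invol a, he, hc2])
    · exact h3 (by rw [← γ.invol_invol a, he, hlk])
  have hinv : Function.Involutive f := by
    intro a
    by_cases h1 : a = i
    · subst h1; rw [hfi, hfl]
    by_cases h2 : a = l
    · subst h2; rw [hfl, hfi]
    by_cases h3 : a = j
    · subst h3; rw [hfj, hfj]
    by_cases h4 : a = k
    · subst h4; rw [hfk, hfk]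
    rw [hfo a h1 h3 h4 h2]
    obtain ⟨o1, o2, o3, o4⟩ := hout a h1 h3 h4 h2
    rw [hfo _ o1 o2 o3 o4, γ.invol_invol]
  -- signs
  set g : Fin (p + q) → Bool := fun a => if a = k then false else γ.sgn a with hg
  have hsi : γ.sgn i = true := γ.sgn_default i (by rw [hc1]; exact hijne.symm)
  have hsj : γ.sgn j = true := γ.sgn_default j (by rw [hji]; exact hijne)
  have hsl : γ.sgn l = true := γ.sgn_default l (by rw [hlk]; exact hklne)
  have hgj : g j = true := by rw [hg]; simp [hjkne, hsj]
  have hgk : g k = false := by simp [hg]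
  have hgo : ∀ a, a ≠ k → g a = γ.sgn a := by intro a h; simp [hg, h]
  -- build the clan γ'
  have hballs := γ.balance
  set S : Finset (Fin (p + q)) := {i, j, k, l} with hS
  have hmemS : ∀ a, a ∉ S ↔ (a ≠ i ∧ a ≠ j ∧ a ≠ k ∧ a ≠ l) := by
    intro a; simp [hS, not_or]
  refine ⟨⟨hinv.toPerm f, hinv, g, ?_, ?_⟩, hfi, hfj, hgj, hfk, hgk, ?_, ?_, ?_⟩
  · -- sgn_default
    intro a ha
    simp only [Function.Involutive.coe_toPerm] at ha
    by_cases h3 : a = k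
    · exact absurd (h3 ▸ hfk) ha
    rw [hgo a h3]
    by_cases h1 : a = i
    · subst h1; exact hsi
    by_cases h2 : a = j
    · subst h2; exact hsj
    by_cases h4 : a = l
    · subst h4; exact hsl
    exact γ.sgn_default a (by rwa [← hfo a h1 h2 h3 h4])
  · -- balance
    simp only [Function.Involutive.coe_toPerm]
    have e1 := key (fun a => f a = a ∧ g a = true)
      (fun a => γ.invol a = a ∧ γ.sgn a = true) S (by
        intro a ha
        obtain ⟨h1, h2, h3, h4⟩ := (hmemS a).mp ha
        simp only [hfo a h1 h2 h3 h4, hgo a h3])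
    have e2 := key (fun a => f a = a ∧ g a = false)
      (fun a => γ.invol a = a ∧ γ.sgn a = false) S (by
        intro a ha
        obtain ⟨h1, h2, h3, h4⟩ := (hmemS a).mp ha
        simp only [hfo a h1 h2 h3 h4, hgo a h3])
    rw [hS] at e1 e2
    rw [card4 _ i j k l hijne hikne hilne hjkne hjlne hklne,
        card4 _ i j k l hijne hikne hilne hjkne hjlne hklne] at e1 e2
    simp [hfi, hfj, hfk, hfl, hgj, hgk, hc1, hc2, hji, hlk, hsi, hsj, hsl,
      hgo i hikne, hgo j hjkne, hgo l (Ne.symm hklne),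
      hijne, hikne, hilne, hjkne, hjlne, hklne,
      Ne.symm hijne, Ne.symm hikne, Ne.symm hilne,
      Ne.symm hjkne, Ne.symm hjlne, Ne.symm hklne] at e1 e2
    have key2 : (univ.filter (fun a => f a = a ∧ g a = true)).card + q =
        (univ.filter (fun a => f a = a ∧ g a = false)).card + p := by omega
    convert key2 <;> exact Finset.filter_congr (fun _ _ => Iff.rfl)
  · -- perturbation locality
    intro a h1 h2 h3 h4
    simp only [Function.Involutive.coe_toPerm]
    exact ⟨hfo a h1 h2 h3 h4, hgo a h3⟩
  · -- le
    refine ⟨fun s => ?_, fun s => ?_, fun s t hst => ?_⟩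
    · -- rankP
      simp only [Clan.rankP, Function.Involutive.coe_toPerm]
      show (univ.filter (fun a => f a = a ∧ g a = true ∧ a.val < s)).card +
          (univ.filter (fun a => a.val < (f a).val ∧ (f a).val < s)).card ≤
        (univ.filter (fun a => γ.invol a = a ∧ γ.sgn a = true ∧ a.val < s)).card +
          (univ.filter (fun a => a.val < (γ.invol a).val ∧ (γ.invol a).val < s)).card
      have e1 := key (fun a => f a = a ∧ g a = true ∧ a.val < s)
        (fun a => γ.invol a = a ∧ γ.sgn a = true ∧ a.val < s) S (by
          intro a ha
          obtain ⟨h1, h2, h3, h4⟩ := (hmemS a).mp ha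
          simp only [hfo a h1 h2 h3 h4, hgo a h3])
      have e2 := key (fun a => a.val < (f a).val ∧ (f a).val < s)
        (fun a => a.val < (γ.invol a).val ∧ (γ.invol a).val < s) S (by
          intro a ha
          obtain ⟨h1, h2, h3, h4⟩ := (hmemS a).mp ha
          simp only [hfo a h1 h2 h3 h4])
      rw [hS] at e1 e2
      rw [card4 _ i j k l hijne hikne hilne hjkne hjlne hklne,
          card4 _ i j k l hijne hikne hilne hjkne hjlne hklne] at e1
      rw [card4 _ i j k l hijne hikne hilne hjkne hjlne hklne,
          card4 _ i j k l hijne hikne hilne hjkne hjlne hklne] at e2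
      simp [hfi, hfj, hfk, hfl, hgj, hgk, hc1, hc2, hji, hlk, hsi, hsj, hsl,
        hgo i hikne, hgo j hjkne, hgo l (Ne.symm hklne),
        hijne, hikne, hilne, hjkne, hjlne, hklne,
        Ne.symm hijne, Ne.symm hikne, Ne.symm hilne,
        Ne.symm hjkne, Ne.symm hjlne, Ne.symm hklne,
        hij, hjk, hkl, hik, hil, hjl,
        hij.asymm, hjk.asymm, hkl.asymm, hik.asymm, hil.asymm, hjl.asymm,
        hij', hjk', hkl'] at e1 e2 ⊢
      split_ifs at e1 e2 <;> omega
    · -- rankM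
      simp only [Clan.rankM, Function.Involutive.coe_toPerm]
      show (univ.filter (fun a => f a = a ∧ g a = false ∧ a.val < s)).card +
          (univ.filter (fun a => a.val < (f a).val ∧ (f a).val < s)).card ≤
        (univ.filter (fun a => γ.invol a = a ∧ γ.sgn a = false ∧ a.val < s)).card +
          (univ.filter (fun a => a.val < (γ.invol a).val ∧ (γ.invol a).val < s)).card
      have e1 := key (fun a => f a = a ∧ g a = false ∧ a.val < s)
        (fun a => γ.invol a = a ∧ γ.sgn a = false ∧ a.val < s) S (by
          intro a ha
          obtain ⟨h1, h2, h3, h4⟩ := (hmemS a).mp ha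
          simp only [hfo a h1 h2 h3 h4, hgo a h3])
      have e2 := key (fun a => a.val < (f a).val ∧ (f a).val < s)
        (fun a => a.val < (γ.invol a).val ∧ (γ.invol a).val < s) S (by
          intro a ha
          obtain ⟨h1, h2, h3, h4⟩ := (hmemS a).mp ha
          simp only [hfo a h1 h2 h3 h4])
      rw [hS] at e1 e2
      rw [card4 _ i j k l hijne hikne hilne hjkne hjlne hklne,
          card4 _ i j k l hijne hikne hilne hjkne hjlne hklne] at e1
      rw [card4 _ i j k l hijne hikne hilne hjkne hjlne hklne,
          card4 _ i j k l hijne hikne hilne hjkne hjlne hklne] at e2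
      simp [hfi, hfj, hfk, hfl, hgj, hgk, hc1, hc2, hji, hlk, hsi, hsj, hsl,
        hgo i hikne, hgo j hjkne, hgo l (Ne.symm hklne),
        hijne, hikne, hilne, hjkne, hjlne, hklne,
        Ne.symm hijne, Ne.symm hikne, Ne.symm hilne,
        Ne.symm hjkne, Ne.symm hjlne, Ne.symm hklne,
        hij, hjk, hkl, hik, hil, hjl,
        hij.asymm, hjk.asymm, hkl.asymm, hik.asymm, hil.asymm, hjl.asymm,
        hij', hjk', hkl'] at e1 e2 ⊢
      split_ifs at e1 e2 <;> omega
    · -- rankJ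
      simp only [Clan.rankJ, Function.Involutive.coe_toPerm]
      show (univ.filter (fun a => a.val < s ∧ t ≤ (γ.invol a).val)).card ≤
        (univ.filter (fun a => a.val < s ∧ t ≤ (f a).val)).card
      have e1 := key (fun a => a.val < s ∧ t ≤ (f a).val)
        (fun a => a.val < s ∧ t ≤ (γ.invol a).val) S (by
          intro a ha
          obtain ⟨h1, h2, h3, h4⟩ := (hmemS a).mp ha
          simp only [hfo a h1 h2 h3 h4])
      rw [hS] at e1
      rw [card4 _ i j k l hijne hikne hilne hjkne hjlne hklne,
          card4 _ i j k l hijne hikne hilne hjkne hjlne hklne] at e1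
      simp [hfi, hfj, hfk, hfl, hc1, hc2, hji, hlk,
        hij, hjk, hkl, hik, hil, hjl,
        hij.asymm, hjk.asymm, hkl.asymm, hik.asymm, hil.asymm, hjl.asymm,
        hij', hjk', hkl'] at e1 ⊢
      split_ifs at e1 <;> omega
  · -- γ ≠ γ'
    intro heq
    apply hijne
    have h2 : γ.invol j = j := by
      rw [heq]; simp only [Function.Involutive.coe_toPerm]; exact hfj
    rw [← hji, h2]
end

section
/- Suppose γ < τ in the combinatorial Bruhat order on (p,q)-clans, and let f be the first position at which γ and τ differ. Then at position f exactly one of the following holds: (a) f is a + fixed point of γ and a first occurrence (smaller element of a 2-cycle) of τ; (b) f is a - fixed point of γ and a first occurrence of τ; or (c) f is a first occurrence in both γ and τ, with the mate of f in γ strictly smaller than the mate of f in τ. -/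
open Finset

/-- Two clans differ at a position `a` if their involutions disagree there, or `a` is a
fixed point of both but carries opposite signs. -/
def Clan.DifferAt {p q : ℕ} (γ τ : Clan p q) (a : Fin (p + q)) : Prop :=
  γ.invol a ≠ τ.invol a ∨ (γ.invol a = a ∧ γ.sgn a ≠ τ.sgn a)

/-- if `γ < τ` in the combinatorial Bruhat order and `f` is the first
position at which `γ` and `τ` differ, then exactly one of: (a) `f` is a `+` fixed point
of `γ` and a first occurrence of `τ`; (b) `f` is a `-` fixed point of `γ` and a first
occurrence of `τ`; (c) `f` is a first occurrence in both, with the mate of `f` in `γ`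
strictly smaller than its mate in `τ`. -/
theorem first_difference_cases {p q : ℕ} (γ τ : Clan p q) (h : Clan.lt γ τ)
    (f : Fin (p + q)) (hf : Clan.DifferAt γ τ f)
    (hfirst : ∀ a, a < f → ¬ Clan.DifferAt γ τ a) :
    (γ.invol f = f ∧ γ.sgn f = true ∧ f < τ.invol f) ∨
    (γ.invol f = f ∧ γ.sgn f = false ∧ f < τ.invol f) ∨
    (f < γ.invol f ∧ f < τ.invol f ∧ γ.invol f < τ.invol f) := by
  obtain ⟨⟨hP, hM, hJ⟩, -⟩ := h
  have agree : ∀ a : Fin (p + q), a < f → γ.invol a = τ.invol a := by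
    intro a ha
    by_contra hc
    exact hfirst a ha (Or.inl hc)
  have sgnag : ∀ a : Fin (p + q), a < f → γ.invol a = a → γ.sgn a = τ.sgn a := by
    intro a ha hfix
    by_contra hc
    exact hfirst a ha (Or.inr ⟨hfix, hc⟩)
  -- Neither clan has f's partner strictly below f
  have hγf : f ≤ γ.invol f := by
    by_contra hc
    push_neg at hc
    have h1 : τ.invol (γ.invol f) = f := by
      rw [← agree _ hc, γ.invol_invol]
    have h2 : τ.invol f = γ.invol f := by
      conv_lhs => rw [← h1, τ.invol_invol]
    rcases hf with h3 | ⟨h3, -⟩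
    · exact h3 h2.symm
    · rw [h3] at hc; exact lt_irrefl f hc
  have hτf : f ≤ τ.invol f := by
    by_contra hc
    push_neg at hc
    have h1 : γ.invol (τ.invol f) = f := by
      rw [agree _ hc, τ.invol_invol]
    have h2 : γ.invol f = τ.invol f := by
      conv_lhs => rw [← h1, γ.invol_invol]
    rcases hf with h3 | ⟨h3, -⟩
    · exact h3 h2
    · rw [h3] at h2; rw [← h2] at hc; exact lt_irrefl f hc
  -- the 2-cycle counts at i = f+1 coincide
  have hcyc : ((Finset.univ : Finset (Fin (p + q))).filter
        (fun a => a.val < (γ.invol a).val ∧ (γ.invol a).val < f.val + 1)) =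
      ((Finset.univ : Finset (Fin (p + q))).filter
        (fun a => a.val < (τ.invol a).val ∧ (τ.invol a).val < f.val + 1)) := by
    ext a
    simp only [Finset.mem_filter, Finset.mem_univ, true_and]
    constructor
    · rintro ⟨h1, h2⟩
      have hlt : (γ.invol a).val < f.val := by
        by_contra hcon
        have he : (γ.invol a).val = f.val := by omega
        have he2 : γ.invol a = f := Fin.ext he
        have h4 : γ.invol f = a := by rw [← he2, γ.invol_invol]
        have h5 : f.val ≤ a.val := by
          have := Fin.le_def.mp hγf; rw [h4] at this; exact this
        omega
      have haf : a < f := Fin.lt_def.mpr (by omega)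
      rw [← agree a haf]
      exact ⟨h1, h2⟩
    · rintro ⟨h1, h2⟩
      have hlt : (τ.invol a).val < f.val := by
        by_contra hcon
        have he : (τ.invol a).val = f.val := by omega
        have he2 : τ.invol a = f := Fin.ext he
        have h4 : τ.invol f = a := by rw [← he2, τ.invol_invol]
        have h5 : f.val ≤ a.val := by
          have := Fin.le_def.mp hτf; rw [h4] at this; exact this
        omega
      have haf : a < f := Fin.lt_def.mpr (by omega)
      rw [agree a haf]
      exact ⟨h1, h2⟩
  -- fixed-point filters agree away from f
  have fixerase : ∀ b : Bool,
      (((Finset.univ : Finset (Fin (p + q))).filter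
        (fun a => γ.invol a = a ∧ γ.sgn a = b ∧ a.val < f.val + 1)).erase f) =
      (((Finset.univ : Finset (Fin (p + q))).filter
        (fun a => τ.invol a = a ∧ τ.sgn a = b ∧ a.val < f.val + 1)).erase f) := by
    intro b
    ext a
    simp only [Finset.mem_erase, Finset.mem_filter, Finset.mem_univ, true_and]
    constructor
    · rintro ⟨hne, h1, h2, h3⟩
      have haf : a < f := Fin.lt_def.mpr (by
        have : a.val ≠ f.val := fun he => hne (Fin.ext he)
        omega)
      refine ⟨hne, ?_, ?_, h3⟩
      · rw [← agree a haf]; exact h1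
      · rw [← sgnag a haf h1]; exact h2
    · rintro ⟨hne, h1, h2, h3⟩
      have haf : a < f := Fin.lt_def.mpr (by
        have : a.val ≠ f.val := fun he => hne (Fin.ext he)
        omega)
      have h1' : γ.invol a = a := (agree a haf).trans h1
      refine ⟨hne, h1', ?_, h3⟩
      · rw [sgnag a haf h1']; exact h2
  -- τ cannot fix f
  have hτnotfix : τ.invol f ≠ f := by
    intro hfix
    have hγne : γ.invol f = f → γ.sgn f ≠ τ.sgn f := by
      intro h1 h2
      rcases hf with h3 | ⟨-, h3⟩
      · exact h3 (h1.trans hfix.symm)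
      · exact h3 h2
    cases hb : τ.sgn f with
    | false =>
      have hm := hM (f.val + 1)
      simp only [Clan.rankM] at hm
      rw [hcyc] at hm
      have hfmem : f ∈ ((Finset.univ : Finset (Fin (p + q))).filter
          (fun a => τ.invol a = a ∧ τ.sgn a = false ∧ a.val < f.val + 1)) := by
        simp only [Finset.mem_filter, Finset.mem_univ, true_and]
        exact ⟨hfix, hb, by omega⟩
      have hfnot : f ∉ ((Finset.univ : Finset (Fin (p + q))).filter
          (fun a => γ.invol a = a ∧ γ.sgn a = false ∧ a.val < f.val + 1)) := by
        simp only [Finset.mem_filter, Finset.mem_univ, true_and]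
        rintro ⟨h1, h2, -⟩
        exact hγne h1 (h2.trans hb.symm)
      have e1 := Finset.card_erase_add_one hfmem
      have e2 := Finset.erase_eq_of_notMem hfnot
      rw [← fixerase false, e2] at e1
      omega
    | true =>
      have hm := hP (f.val + 1)
      simp only [Clan.rankP] at hm
      rw [hcyc] at hm
      have hfmem : f ∈ ((Finset.univ : Finset (Fin (p + q))).filter
          (fun a => τ.invol a = a ∧ τ.sgn a = true ∧ a.val < f.val + 1)) := by
        simp only [Finset.mem_filter, Finset.mem_univ, true_and]
        exact ⟨hfix, hb, by omega⟩
      have hfnot : f ∉ ((Finset.univ : Finset (Fin (p + q))).filter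
          (fun a => γ.invol a = a ∧ γ.sgn a = true ∧ a.val < f.val + 1)) := by
        simp only [Finset.mem_filter, Finset.mem_univ, true_and]
        rintro ⟨h1, h2, -⟩
        exact hγne h1 (h2.trans hb.symm)
      have e1 := Finset.card_erase_add_one hfmem
      have e2 := Finset.erase_eq_of_notMem hfnot
      rw [← fixerase true, e2] at e1
      omega
  have hτlt : f < τ.invol f := lt_of_le_of_ne hτf (Ne.symm hτnotfix)
  rcases eq_or_lt_of_le hγf with heq | hlt
  · -- γ fixes f: cases (a)/(b)
    cases hs : γ.sgn f with
    | true => exact Or.inl ⟨heq.symm, rfl, hτlt⟩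
    | false => exact Or.inr (Or.inl ⟨heq.symm, rfl, hτlt⟩)
  · -- both are first occurrences
    have hne2 : γ.invol f ≠ τ.invol f := by
      rcases hf with h3 | ⟨h3, -⟩
      · exact h3
      · exact absurd h3 (ne_of_gt hlt)
    rcases lt_or_gt_of_ne hne2 with hlt2 | hgt
    · exact Or.inr (Or.inr ⟨hlt, hτlt, hlt2⟩)
    · exfalso
      have hij : f.val + 1 < (τ.invol f).val + 1 := by
        have := Fin.lt_def.mp hτlt; omega
      have hj := hJ (f.val + 1) ((τ.invol f).val + 1) hij
      simp only [Clan.rankJ] at hj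
      have hjerase : (((Finset.univ : Finset (Fin (p + q))).filter
            (fun a => a.val < f.val + 1 ∧ (τ.invol f).val + 1 ≤ (γ.invol a).val)).erase f) =
          (((Finset.univ : Finset (Fin (p + q))).filter
            (fun a => a.val < f.val + 1 ∧ (τ.invol f).val + 1 ≤ (τ.invol a).val)).erase f) := by
        ext a
        simp only [Finset.mem_erase, Finset.mem_filter, Finset.mem_univ, true_and]
        constructor
        · rintro ⟨hne, h1, h2⟩
          have haf : a < f := Fin.lt_def.mpr (by
            have : a.val ≠ f.val := fun he => hne (Fin.ext he)
            omega)
          refine ⟨hne, h1, ?_⟩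
          rw [← agree a haf]; exact h2
        · rintro ⟨hne, h1, h2⟩
          have haf : a < f := Fin.lt_def.mpr (by
            have : a.val ≠ f.val := fun he => hne (Fin.ext he)
            omega)
          refine ⟨hne, h1, ?_⟩
          rw [agree a haf]; exact h2
      have hfmem : f ∈ ((Finset.univ : Finset (Fin (p + q))).filter
          (fun a => a.val < f.val + 1 ∧ (τ.invol f).val + 1 ≤ (γ.invol a).val)) := by
        simp only [Finset.mem_filter, Finset.mem_univ, true_and]
        exact ⟨by omega, by have := Fin.lt_def.mp hgt; omega⟩
      have hfnot : f ∉ ((Finset.univ : Finset (Fin (p + q))).filter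
          (fun a => a.val < f.val + 1 ∧ (τ.invol f).val + 1 ≤ (τ.invol a).val)) := by
        simp only [Finset.mem_filter, Finset.mem_univ, true_and]
        rintro ⟨-, h2⟩
        omega
      have e1 := Finset.card_erase_add_one hfmem
      have e2 := Finset.erase_eq_of_notMem hfnot
      rw [hjerase, e2] at e1
      omega
end
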